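/- arXiv:1111.4307 — 10 statements merged into one kernel-verified Lean document; each statement's English description precedes it below -/
import Mathlib

section
/- Let a, b, c, d be real numbers with a² + b² ≠ 0, c² + d² ≠ 0 and a·d − b·c ≠ 0. Then there exists a real number φ such that (a·cosh 2φ + c·sinh 2φ)(a·sinh 2φ + c·cosh 2φ) + (b·cosh 2φ + d·sinh 2φ)(b·sinh 2φ + d·cosh 2φ) = 0. -/
/-!
With `u = (a, b)`, `v = (c, d)` and `s = 2φ`, the expression equals
`((|u|² + |v|²) sinh 2s + 2 ⟪u, v⟫ cosh 2s) / 2`. Lagrange's identity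
`(|u|² + |v|²)² - 4 ⟪u, v⟫² = (|u|² - |v|²)² + 4 (ad - bc)²` gives `|2 ⟪u, v⟫| < |u|² + |v|²`,
and `p sinh t + q cosh t = 0` is solvable whenever `|q| < p`.
-/

open Real

/-- Writing `e = exp t`, the equation reads `(p + q) e = (p - q) e⁻¹`, solved by `e² = (p - q) / (p + q)`. -/
theorem exists_mul_sinh_add_mul_cosh_eq_zero {p q : ℝ} (hqp : |q| < p) :
    ∃ t : ℝ, p * sinh t + q * cosh t = 0 := by
  obtain ⟨hneg, hpos⟩ := abs_lt.mp hqp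
  have hsum : 0 < p + q := by linarith
  have hdiff : 0 < p - q := by linarith
  refine ⟨log ((p - q) / (p + q)) / 2, ?_⟩
  set e := exp (log ((p - q) / (p + q)) / 2) with he
  have he_pos : 0 < e := exp_pos _
  have he_sq : e * e = (p - q) / (p + q) := by
    rw [he, ← exp_add, add_halves, exp_log (div_pos hdiff hsum)]
  rw [sinh_eq, cosh_eq, exp_neg, ← he]
  field_simp at he_sq ⊢
  linear_combination he_sq

theorem rotated_ac_add_bd_eq (a b c d s : ℝ) :
    (a * cosh s + c * sinh s) * (a * sinh s + c * cosh s) +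
        (b * cosh s + d * sinh s) * (b * sinh s + d * cosh s) =
      ((a ^ 2 + b ^ 2 + c ^ 2 + d ^ 2) * sinh (2 * s) + 2 * (a * c + b * d) * cosh (2 * s)) / 2 := by
  rw [sinh_two_mul, cosh_two_mul]
  ring

theorem abs_two_mul_inner_lt_sum_sq {a b c d : ℝ} (h : a * d - b * c ≠ 0) :
    |2 * (a * c + b * d)| < a ^ 2 + b ^ 2 + c ^ 2 + d ^ 2 := by
  have lagrange : (a ^ 2 + b ^ 2 + c ^ 2 + d ^ 2) ^ 2 - (2 * (a * c + b * d)) ^ 2 =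
      (a ^ 2 + b ^ 2 - c ^ 2 - d ^ 2) ^ 2 + 4 * (a * d - b * c) ^ 2 := by ring
  refine abs_lt_of_sq_lt_sq ?_ (by positivity)
  linarith [sq_nonneg (a ^ 2 + b ^ 2 - c ^ 2 - d ^ 2), sq_pos_of_ne_zero h]

theorem exists_canonical_rotation_general
    (a b c d : ℝ)
    (h3 : a * d - b * c ≠ 0) :
    ∃ φ : ℝ,
      (a * Real.cosh (2 * φ) + c * Real.sinh (2 * φ)) *
          (a * Real.sinh (2 * φ) + c * Real.cosh (2 * φ)) +
        (b * Real.cosh (2 * φ) + d * Real.sinh (2 * φ)) *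
          (b * Real.sinh (2 * φ) + d * Real.cosh (2 * φ)) = 0 := by
  obtain ⟨t, ht⟩ := exists_mul_sinh_add_mul_cosh_eq_zero (abs_two_mul_inner_lt_sum_sq h3)
  refine ⟨t / 4, ?_⟩
  rw [rotated_ac_add_bd_eq, show 2 * (2 * (t / 4)) = t by ring, ht, zero_div]

theorem exists_canonical_rotation
    (a b c d : ℝ)
    (h1 : a ^ 2 + b ^ 2 ≠ 0) (h2 : c ^ 2 + d ^ 2 ≠ 0) (h3 : a * d - b * c ≠ 0) :
    ∃ φ : ℝ,
      (a * Real.cosh (2 * φ) + c * Real.sinh (2 * φ)) *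
          (a * Real.sinh (2 * φ) + c * Real.cosh (2 * φ)) +
        (b * Real.cosh (2 * φ) + d * Real.sinh (2 * φ)) *
          (b * Real.sinh (2 * φ) + d * Real.cosh (2 * φ)) = 0 :=
  exists_canonical_rotation_general a b c d h3
end

section
/- Let D ⊆ ℝ² be a nonempty open set, let a, b : D → ℝ be smooth positive functions, and let μ, ν, γ₁, γ₂, β₁, β₂ : D → ℝ be smooth functions satisfying on all of D the structure equations: 2μγ₂ + νβ₂ = a·μ_u, −2μγ₁ + νβ₁ = b·μ_v, 2νγ₂ − μβ₂ = a·ν_u, −2νγ₁ − μβ₁ = b·ν_v, ν² − μ² = a·(γ₂)_u + b·(γ₁)_v + γ₁² − γ₂², and 2νμ = a·(β₂)_u − b·(β₁)_v − γ₁β₁ − γ₂β₂, where subscripts u, v denote partial derivatives. If μ(p)·ν(p) ≠ 0 for every p ∈ D, then it is impossible that ν² = μ² holds at every point of D. -/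
/-- Partial derivative with respect to the first variable. -/
noncomputable def pd1 (f : ℝ × ℝ → ℝ) (p : ℝ × ℝ) : ℝ := fderiv ℝ f p (1, 0)

/-- Partial derivative with respect to the second variable. -/
noncomputable def pd2 (f : ℝ × ℝ → ℝ) (p : ℝ × ℝ) : ℝ := fderiv ℝ f p (0, 1)

theorem gauss_curvature_not_identically_zero
    (D : Set (ℝ × ℝ)) (hD : IsOpen D) (hne : D.Nonempty)
    (a b μ ν γ₁ γ₂ β₁ β₂ : ℝ × ℝ → ℝ)
    (ha : ContDiffOn ℝ (⊤ : ℕ∞) a D) (hb : ContDiffOn ℝ (⊤ : ℕ∞) b D)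
    (hapos : ∀ p ∈ D, 0 < a p) (hbpos : ∀ p ∈ D, 0 < b p)
    (hμ : ContDiffOn ℝ (⊤ : ℕ∞) μ D) (hν : ContDiffOn ℝ (⊤ : ℕ∞) ν D)
    (hγ₁ : ContDiffOn ℝ (⊤ : ℕ∞) γ₁ D) (hγ₂ : ContDiffOn ℝ (⊤ : ℕ∞) γ₂ D)
    (hβ₁ : ContDiffOn ℝ (⊤ : ℕ∞) β₁ D) (hβ₂ : ContDiffOn ℝ (⊤ : ℕ∞) β₂ D)
    (e1 : ∀ p ∈ D, 2 * μ p * γ₂ p + ν p * β₂ p = a p * pd1 μ p)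
    (e2 : ∀ p ∈ D, -(2 * μ p * γ₁ p) + ν p * β₁ p = b p * pd2 μ p)
    (e3 : ∀ p ∈ D, 2 * ν p * γ₂ p - μ p * β₂ p = a p * pd1 ν p)
    (e4 : ∀ p ∈ D, -(2 * ν p * γ₁ p) - μ p * β₁ p = b p * pd2 ν p)
    (e5 : ∀ p ∈ D, ν p ^ 2 - μ p ^ 2 =
      a p * pd1 γ₂ p + b p * pd2 γ₁ p + γ₁ p ^ 2 - γ₂ p ^ 2)
    (e6 : ∀ p ∈ D, 2 * ν p * μ p =
      a p * pd1 β₂ p - b p * pd2 β₁ p - γ₁ p * β₁ p - γ₂ p * β₂ p)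
    (hflat : ∀ p ∈ D, μ p * ν p ≠ 0) :
    ¬ (∀ p ∈ D, ν p ^ 2 = μ p ^ 2) := by
  intro h
  obtain ⟨p, hp⟩ := hne
  have hμν := hflat p hp
  have hμp : μ p ≠ 0 := fun h0 => hμν (by rw [h0]; ring)
  obtain ⟨ε, hε, hεp⟩ : ∃ ε : ℝ, ε ^ 2 = 1 ∧ ν p = ε * μ p := by
    have hh := h p hp
    have hz : (ν p - μ p) * (ν p + μ p) = 0 := by nlinarith [hh]
    rcases mul_eq_zero.mp hz with h1 | h2
    · exact ⟨1, by norm_num, by linarith⟩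
    · exact ⟨-1, by norm_num, by linarith⟩
  have hεne : ε ≠ 0 := by intro h0; rw [h0] at hε; norm_num at hε
  set g : ℝ × ℝ → ℝ := fun q => ν q + ε * μ q with hgdef
  have hgcont : ContinuousOn g D :=
    hν.continuousOn.add (continuousOn_const.mul hμ.continuousOn)
  set U : Set (ℝ × ℝ) := D ∩ g ⁻¹' {(0 : ℝ)}ᶜ with hUdef
  have hUopen : IsOpen U := hgcont.isOpen_inter_preimage hD isOpen_compl_singleton
  have hUD : U ⊆ D := Set.inter_subset_left
  have hpU : p ∈ U := by
    refine ⟨hp, ?_⟩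
    simp only [Set.mem_preimage, Set.mem_compl_iff, Set.mem_singleton_iff, hgdef]
    intro h0
    have : ε * μ p = 0 := by nlinarith [h0, hεp, hε]
    rcases mul_eq_zero.mp this with h1 | h2
    · exact hεne h1
    · exact hμp h2
  have hνU : ∀ q ∈ U, ν q = ε * μ q := by
    intro q hq
    have hq2 := h q (hUD hq)
    have hg0 : ν q + ε * μ q ≠ 0 := hq.2
    have hz : (ν q - ε * μ q) * (ν q + ε * μ q) = 0 := by
      linear_combination hq2 - μ q ^ 2 * hε
    rcases mul_eq_zero.mp hz with h1 | h2
    · linarith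
    · exact absurd h2 hg0
  have hdiff : ∀ (f : ℝ × ℝ → ℝ), ContDiffOn ℝ (⊤ : ℕ∞) f D → ∀ q ∈ U, DifferentiableAt ℝ f q :=
    fun f hf q hq => (hf.contDiffAt (hD.mem_nhds (hUD hq))).differentiableAt (by simp)
  have hfd : ∀ q ∈ U, fderiv ℝ ν q = ε • fderiv ℝ μ q := by
    intro q hq
    have hev : ν =ᶠ[nhds q] fun x => ε * μ x :=
      Filter.eventuallyEq_of_mem (hUopen.mem_nhds hq) (fun x hx => hνU x hx)
    rw [hev.fderiv_eq, fderiv_const_mul (hdiff μ hμ q hq) ε]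
  have hβ₂U : ∀ q ∈ U, β₂ q = 0 := by
    intro q hq
    have hqD := hUD hq
    have h1 := e1 q hqD
    have h3 := e3 q hqD
    have hνq := hνU q hq
    have hpd : pd1 ν q = ε * pd1 μ q := by
      simp only [pd1, hfd q hq, ContinuousLinearMap.smul_apply, smul_eq_mul]
    have hμq : μ q ≠ 0 := fun h0 => hflat q hqD (by rw [h0]; ring)
    have h2μ : 2 * μ q * β₂ q = 0 := by
      rw [hνq] at h1 h3
      rw [hpd] at h3
      linear_combination ε * h1 - h3 - μ q * β₂ q * hε
    have := mul_eq_zero.mp h2μ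
    rcases this with h1' | h2'
    · exact absurd h1' (by simpa using hμq)
    · exact h2'
  have hβ₁U : ∀ q ∈ U, β₁ q = 0 := by
    intro q hq
    have hqD := hUD hq
    have h2 := e2 q hqD
    have h4 := e4 q hqD
    have hνq := hνU q hq
    have hpd : pd2 ν q = ε * pd2 μ q := by
      simp only [pd2, hfd q hq, ContinuousLinearMap.smul_apply, smul_eq_mul]
    have hμq : μ q ≠ 0 := fun h0 => hflat q hqD (by rw [h0]; ring)
    have h2μ : 2 * μ q * β₁ q = 0 := by
      rw [hνq] at h2 h4
      rw [hpd] at h4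
      linear_combination ε * h2 - h4 - μ q * β₁ q * hε
    rcases mul_eq_zero.mp h2μ with h1' | h2'
    · exact absurd h1' (by simpa using hμq)
    · exact h2'
  have hβ₂ev : β₂ =ᶠ[nhds p] fun _ => (0 : ℝ) :=
    Filter.eventuallyEq_of_mem (hUopen.mem_nhds hpU) (fun x hx => hβ₂U x hx)
  have hβ₁ev : β₁ =ᶠ[nhds p] fun _ => (0 : ℝ) :=
    Filter.eventuallyEq_of_mem (hUopen.mem_nhds hpU) (fun x hx => hβ₁U x hx)
  have hpd1β₂ : pd1 β₂ p = 0 := by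
    simp only [pd1, hβ₂ev.fderiv_eq, fderiv_const]
    simp
  have hpd2β₁ : pd2 β₁ p = 0 := by
    simp only [pd2, hβ₁ev.fderiv_eq, fderiv_const]
    simp
  have h6 := e6 p hp
  rw [hpd1β₂, hpd2β₁, hβ₁U p hpU, hβ₂U p hpU] at h6
  apply hμν
  nlinarith [h6]
end

section
/- Let D ⊆ ℝ² be open and let μ, ν : D → ℝ be smooth functions with ν ≠ 0 and μ² + ν² > 0 everywhere on D. Set P = (μ² + ν²)^{1/4}, θ = arctan(μ/ν), γ₁ = −P_v, γ₂ = P_u, β₁ = P·θ_v, β₂ = P·θ_u. Then the Gauss equation ν² − μ² = P·(γ₂)_u + P·(γ₁)_v + γ₁² − γ₂² holds at a point if and only if (μ² + ν²)^{1/2}·Δʰ ln (μ² + ν²)^{1/4} = ν² − μ² holds there, and the Ricci equation 2νμ = P·(β₂)_u − P·(β₁)_v − γ₁β₁ − γ₂β₂ holds at a point if and only if (μ² + ν²)^{1/2}·Δʰ arctan(μ/ν) = 2νμ holds there. -/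
/-- The hyperbolic Laplace operator Δʰ = ∂²/∂u² − ∂²/∂v². -/
noncomputable def lapH (f : ℝ × ℝ → ℝ) (p : ℝ × ℝ) : ℝ := pd1 (pd1 f) p - pd2 (pd2 f) p

private lemma pdw_mul {f g : ℝ × ℝ → ℝ} {p : ℝ × ℝ} (w : ℝ × ℝ)
    (hf : DifferentiableAt ℝ f p) (hg : DifferentiableAt ℝ g p) :
    fderiv ℝ (fun q => f q * g q) p w = fderiv ℝ f p w * g p + f p * fderiv ℝ g p w := by
  rw [fderiv_fun_mul hf hg]
  simp only [ContinuousLinearMap.add_apply, ContinuousLinearMap.smul_apply, smul_eq_mul]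
  ring

private lemma pdw_inv {f : ℝ × ℝ → ℝ} {p : ℝ × ℝ} (w : ℝ × ℝ)
    (hf : DifferentiableAt ℝ f p) (h0 : f p ≠ 0) :
    fderiv ℝ (fun q => (f q)⁻¹) p w = -(fderiv ℝ f p w) / f p ^ 2 := by
  have h := ((hasDerivAt_inv h0).comp_hasFDerivAt p hf.hasFDerivAt).fderiv
  have : fderiv ℝ (fun q => (f q)⁻¹) p = (-(f p ^ 2)⁻¹) • fderiv ℝ f p := h
  rw [this]
  simp [div_eq_mul_inv, mul_comm]

private lemma pdw_log {f : ℝ × ℝ → ℝ} {p : ℝ × ℝ} (w : ℝ × ℝ)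
    (hf : DifferentiableAt ℝ f p) (h0 : f p ≠ 0) :
    fderiv ℝ (fun q => Real.log (f q)) p w = (f p)⁻¹ * fderiv ℝ f p w := by
  rw [(hf.hasFDerivAt.log h0).fderiv]
  simp

private lemma contDiffAt_pdw {f : ℝ × ℝ → ℝ} {p : ℝ × ℝ} (w : ℝ × ℝ)
    (h : ContDiffAt ℝ (⊤ : ℕ∞) f p) :
    ContDiffAt ℝ (⊤ : ℕ∞) (fun q => fderiv ℝ f q w) p := by
  have : (fun q => fderiv ℝ f q w)
      = fun q => (ContinuousLinearMap.apply ℝ ℝ w) (fderiv ℝ f q) := rfl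
  rw [this]
  exact ((ContinuousLinearMap.apply ℝ ℝ w).contDiff.contDiffAt).comp p (h.fderiv_right (by simp))

theorem canonical_structure_equations_iff_natural_PDEs
    (D : Set (ℝ × ℝ)) (hD : IsOpen D)
    (μ ν : ℝ × ℝ → ℝ)
    (hμ : ContDiffOn ℝ (⊤ : ℕ∞) μ D) (hν : ContDiffOn ℝ (⊤ : ℕ∞) ν D)
    (hν0 : ∀ p ∈ D, ν p ≠ 0)
    (hpos : ∀ p ∈ D, 0 < μ p ^ 2 + ν p ^ 2)
    (P θ γ₁ γ₂ β₁ β₂ : ℝ × ℝ → ℝ)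
    (hP : ∀ p, P p = (μ p ^ 2 + ν p ^ 2) ^ ((1 : ℝ) / 4))
    (hθ : ∀ p, θ p = Real.arctan (μ p / ν p))
    (hγ₁ : ∀ p, γ₁ p = -pd2 P p)
    (hγ₂ : ∀ p, γ₂ p = pd1 P p)
    (hβ₁ : ∀ p, β₁ p = P p * pd2 θ p)
    (hβ₂ : ∀ p, β₂ p = P p * pd1 θ p) :
    ∀ p ∈ D,
      ((ν p ^ 2 - μ p ^ 2 =
          P p * pd1 γ₂ p + P p * pd2 γ₁ p + γ₁ p ^ 2 - γ₂ p ^ 2) ↔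
        (μ p ^ 2 + ν p ^ 2) ^ ((1 : ℝ) / 2) *
            lapH (fun q => Real.log ((μ q ^ 2 + ν q ^ 2) ^ ((1 : ℝ) / 4))) p =
          ν p ^ 2 - μ p ^ 2) ∧
      ((2 * ν p * μ p =
          P p * pd1 β₂ p - P p * pd2 β₁ p - γ₁ p * β₁ p - γ₂ p * β₂ p) ↔
        (μ p ^ 2 + ν p ^ 2) ^ ((1 : ℝ) / 2) *
            lapH (fun q => Real.arctan (μ q / ν q)) p =
          2 * ν p * μ p) := by
  intro p hp
  have hPfun : P = fun q => (μ q ^ 2 + ν q ^ 2) ^ ((1 : ℝ) / 4) := funext hP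
  have hθfun : θ = fun q => Real.arctan (μ q / ν q) := funext hθ
  -- smoothness facts on D
  have hSc : ∀ q ∈ D, ContDiffAt ℝ (⊤ : ℕ∞) (fun r => μ r ^ 2 + ν r ^ 2) q := fun q hq =>
    ((hμ.contDiffAt (hD.mem_nhds hq)).pow 2).add ((hν.contDiffAt (hD.mem_nhds hq)).pow 2)
  have hPc : ∀ q ∈ D, ContDiffAt ℝ (⊤ : ℕ∞) P q := fun q hq => by
    rw [hPfun]
    exact (hSc q hq).rpow_const_of_ne (ne_of_gt (hpos q hq))
  have hPpos : ∀ q ∈ D, 0 < P q := fun q hq => by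
    rw [hP]
    exact Real.rpow_pos_of_pos (hpos q hq) _
  have hθc : ∀ q ∈ D, ContDiffAt ℝ (⊤ : ℕ∞) θ q := fun q hq => by
    rw [hθfun]
    exact Real.contDiff_arctan.contDiffAt.comp q
      ((hμ.contDiffAt (hD.mem_nhds hq)).div (hν.contDiffAt (hD.mem_nhds hq)) (hν0 q hq))
  -- facts at p
  have hPp : ContDiffAt ℝ (⊤ : ℕ∞) P p := hPc p hp
  have hPd : DifferentiableAt ℝ P p := hPp.differentiableAt (by simp)
  have hP0 : P p ≠ 0 := (hPpos p hp).ne'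
  have hθp : ContDiffAt ℝ (⊤ : ℕ∞) θ p := hθc p hp
  have hθd : DifferentiableAt ℝ θ p := hθp.differentiableAt (by simp)
  have hpd1P : DifferentiableAt ℝ (pd1 P) p := (contDiffAt_pdw (1, 0) hPp).differentiableAt (by simp)
  have hpd2P : DifferentiableAt ℝ (pd2 P) p := (contDiffAt_pdw (0, 1) hPp).differentiableAt (by simp)
  have hpd1θ : DifferentiableAt ℝ (pd1 θ) p := (contDiffAt_pdw (1, 0) hθp).differentiableAt (by simp)
  have hpd2θ : DifferentiableAt ℝ (pd2 θ) p := (contDiffAt_pdw (0, 1) hθp).differentiableAt (by simp)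
  -- abbreviations
  set A1 := pd1 P p with hA1
  set A2 := pd2 P p with hA2
  set B1 := pd1 (pd1 P) p with hB1
  set B2 := pd2 (pd2 P) p with hB2
  -- derivative of log P
  have hev1 : pd1 (fun q => Real.log (P q)) =ᶠ[nhds p] fun q => (P q)⁻¹ * pd1 P q := by
    filter_upwards [hD.eventually_mem hp] with q hq
    exact pdw_log (1, 0) ((hPc q hq).differentiableAt (by simp)) (hPpos q hq).ne'
  have hev2 : pd2 (fun q => Real.log (P q)) =ᶠ[nhds p] fun q => (P q)⁻¹ * pd2 P q := by
    filter_upwards [hD.eventually_mem hp] with q hq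
    exact pdw_log (0, 1) ((hPc q hq).differentiableAt (by simp)) (hPpos q hq).ne'
  have h11 : pd1 (pd1 (fun q => Real.log (P q))) p
      = -A1 / P p ^ 2 * A1 + (P p)⁻¹ * B1 := by
    show fderiv ℝ (pd1 (fun q => Real.log (P q))) p (1, 0) = _
    rw [hev1.fderiv_eq, pdw_mul (1, 0) (f := fun q => (P q)⁻¹) (hPd.inv hP0) hpd1P, pdw_inv (1, 0) hPd hP0]
    rfl
  have h22 : pd2 (pd2 (fun q => Real.log (P q))) p
      = -A2 / P p ^ 2 * A2 + (P p)⁻¹ * B2 := by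
    show fderiv ℝ (pd2 (fun q => Real.log (P q))) p (0, 1) = _
    rw [hev2.fderiv_eq, pdw_mul (0, 1) (f := fun q => (P q)⁻¹) (hPd.inv hP0) hpd2P, pdw_inv (0, 1) hPd hP0]
    rfl
  -- (μ²+ν²)^(1/2) = P p ^ 2
  have hhalf : (μ p ^ 2 + ν p ^ 2) ^ ((1 : ℝ) / 2) = P p ^ 2 := by
    rw [hP, ← Real.rpow_natCast ((μ p ^ 2 + ν p ^ 2) ^ ((1 : ℝ) / 4)) 2,
      ← Real.rpow_mul (le_of_lt (hpos p hp))]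
    norm_num
  -- first derivatives of γ's
  have hdg2 : pd1 γ₂ p = B1 := by
    have : γ₂ = pd1 P := funext hγ₂
    rw [this]
  have hdg1 : pd2 γ₁ p = -B2 := by
    have : γ₁ = fun q => -pd2 P q := funext hγ₁
    rw [this]
    show fderiv ℝ (fun q => -pd2 P q) p (0, 1) = _
    rw [fderiv_fun_neg]
    simp [hB2, pd2]
  constructor
  · -- Gauss equation
    have hlog : (fun q => Real.log ((μ q ^ 2 + ν q ^ 2) ^ ((1 : ℝ) / 4)))
        = fun q => Real.log (P q) := by
      funext q; rw [hP]
    have key : P p * pd1 γ₂ p + P p * pd2 γ₁ p + γ₁ p ^ 2 - γ₂ p ^ 2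
        = (μ p ^ 2 + ν p ^ 2) ^ ((1 : ℝ) / 2) *
            lapH (fun q => Real.log ((μ q ^ 2 + ν q ^ 2) ^ ((1 : ℝ) / 4))) p := by
      rw [hlog, lapH, h11, h22, hdg1, hdg2, hγ₁ p, hγ₂ p, hhalf]
      field_simp
      ring
    rw [key]
    exact eq_comm
  · -- Ricci equation
    have hθlam : (fun q => Real.arctan (μ q / ν q)) = θ := hθfun.symm
    have hdb2 : pd1 β₂ p = A1 * pd1 θ p + P p * pd1 (pd1 θ) p := by
      have : β₂ = fun q => P q * pd1 θ q := funext hβ₂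
      rw [this]
      exact pdw_mul (1, 0) hPd hpd1θ
    have hdb1 : pd2 β₁ p = A2 * pd2 θ p + P p * pd2 (pd2 θ) p := by
      have : β₁ = fun q => P q * pd2 θ q := funext hβ₁
      rw [this]
      exact pdw_mul (0, 1) hPd hpd2θ
    have key : P p * pd1 β₂ p - P p * pd2 β₁ p - γ₁ p * β₁ p - γ₂ p * β₂ p
        = (μ p ^ 2 + ν p ^ 2) ^ ((1 : ℝ) / 2) *
            lapH (fun q => Real.arctan (μ q / ν q)) p := by
      rw [hθlam, lapH, hdb1, hdb2, hγ₁ p, hγ₂ p, hβ₁ p, hβ₂ p, hhalf]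
      ring
    rw [key]
    exact eq_comm
end

section
/- Let I and J be open intervals, D = I × J, and let E, G, μ, ν : D → ℝ be smooth functions with E < 0, G > 0 and μ² + ν² > 0 on D. Suppose that on D the following hold: (ln √(−E))_v = −(1/4)·(ln(μ² + ν²))_v and (ln √G)_u = −(1/4)·(ln(μ² + ν²))_u. Then there exist smooth functions φ : I → (0,∞) and ψ : J → (0,∞) such that −E(u,v)·√(μ(u,v)² + ν(u,v)²) = φ(u) and G(u,v)·√(μ(u,v)² + ν(u,v)²) = ψ(v) for all (u,v) ∈ D. -/
private lemma log_fderiv_zero {U : Set (ℝ × ℝ)} (hU : IsOpen U) (f s : ℝ × ℝ → ℝ)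
    (hf : ∀ p ∈ U, DifferentiableAt ℝ f p) (hs : ∀ p ∈ U, DifferentiableAt ℝ s p)
    (hfpos : ∀ p ∈ U, 0 < f p) (hspos : ∀ p ∈ U, 0 < s p) (w : ℝ × ℝ)
    (heq : ∀ p ∈ U, fderiv ℝ (fun q => Real.log (Real.sqrt (f q))) p w =
        -(1 / 4) * fderiv ℝ (fun q => Real.log (s q)) p w) :
    ∀ p ∈ U, fderiv ℝ (fun q => Real.log (f q) + (1 / 2) * Real.log (s q)) p w = 0 := by
  intro p hp
  have hlogf : DifferentiableAt ℝ (fun q => Real.log (f q)) p :=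
    (Real.differentiableAt_log (ne_of_gt (hfpos p hp))).comp p (hf p hp)
  have hlogs : DifferentiableAt ℝ (fun q => Real.log (s q)) p :=
    (Real.differentiableAt_log (ne_of_gt (hspos p hp))).comp p (hs p hp)
  -- rewrite heq using log √(f q) = (1/2) * log (f q) near p
  have hev : (fun q => Real.log (Real.sqrt (f q))) =ᶠ[nhds p]
      (fun q => (1 / 2) * Real.log (f q)) := by
    filter_upwards [hU.mem_nhds hp] with q hq
    rw [Real.log_sqrt (hfpos q hq).le]; ring
  have h1 : fderiv ℝ (fun q => Real.log (Real.sqrt (f q))) p =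
      fderiv ℝ (fun q => (1 / 2) * Real.log (f q)) p := hev.fderiv_eq
  have h2 : fderiv ℝ (fun q => (1 / 2) * Real.log (f q)) p =
      (1 / 2 : ℝ) • fderiv ℝ (fun q => Real.log (f q)) p := fderiv_const_mul hlogf _
  have key := heq p hp
  rw [h1, h2] at key
  simp only [ContinuousLinearMap.smul_apply, smul_eq_mul] at key
  have h3 : fderiv ℝ (fun q => Real.log (f q) + (1 / 2) * Real.log (s q)) p =
      fderiv ℝ (fun q => Real.log (f q)) p +
        fderiv ℝ (fun q => (1 / 2) * Real.log (s q)) p :=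
    fderiv_add hlogf (hlogs.const_mul _)
  have h4 : fderiv ℝ (fun q => (1 / 2) * Real.log (s q)) p =
      (1 / 2 : ℝ) • fderiv ℝ (fun q => Real.log (s q)) p := fderiv_const_mul hlogs _
  rw [h3, h4]
  simp only [ContinuousLinearMap.add_apply, ContinuousLinearMap.smul_apply, smul_eq_mul]
  linarith

private lemma const_snd {I J : Set ℝ} (hJconv : Convex ℝ J)
    (hJopen : IsOpen J) (L : ℝ × ℝ → ℝ)
    (hdiff : ∀ p ∈ I ×ˢ J, DifferentiableAt ℝ L p)
    (hz : ∀ p ∈ I ×ˢ J, fderiv ℝ L p (0, 1) = 0)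
    {u v v₀ : ℝ} (hu : u ∈ I) (hv : v ∈ J) (hv0 : v₀ ∈ J) : L (u, v) = L (u, v₀) := by
  set g : ℝ → ℝ := fun t => L (u, t) with hg
  have key : ∀ t ∈ J, HasDerivAt g 0 t := by
    intro t ht
    have htm : (u, t) ∈ I ×ˢ J := ⟨hu, ht⟩
    have h1 : HasDerivAt (fun t : ℝ => ((u, t) : ℝ × ℝ)) (0, 1) t :=
      (hasDerivAt_const t u).prodMk (hasDerivAt_id t)
    have h2 := (hdiff _ htm).hasFDerivAt.comp_hasDerivAt t h1
    rwa [hz _ htm] at h2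
  have hdo : DifferentiableOn ℝ g J := fun t ht =>
    ((key t ht).differentiableAt).differentiableWithinAt
  apply hJconv.is_const_of_fderivWithin_eq_zero hdo _ hv hv0
  intro x hx
  rw [(key x hx).differentiableAt.fderivWithin (hJopen.uniqueDiffOn x hx)]
  ext t
  simp [(key x hx).deriv, ← toSpanSingleton_deriv]

private lemma const_fst {I J : Set ℝ} (hIconv : Convex ℝ I)
    (hIopen : IsOpen I) (L : ℝ × ℝ → ℝ)
    (hdiff : ∀ p ∈ I ×ˢ J, DifferentiableAt ℝ L p)
    (hz : ∀ p ∈ I ×ˢ J, fderiv ℝ L p (1, 0) = 0)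
    {u u₀ v : ℝ} (hu : u ∈ I) (hu0 : u₀ ∈ I) (hv : v ∈ J) : L (u, v) = L (u₀, v) := by
  set g : ℝ → ℝ := fun t => L (t, v) with hg
  have key : ∀ t ∈ I, HasDerivAt g 0 t := by
    intro t ht
    have htm : (t, v) ∈ I ×ˢ J := ⟨ht, hv⟩
    have h1 : HasDerivAt (fun t : ℝ => ((t, v) : ℝ × ℝ)) (1, 0) t :=
      (hasDerivAt_id t).prodMk (hasDerivAt_const t v)
    have h2 := (hdiff _ htm).hasFDerivAt.comp_hasDerivAt t h1
    rwa [hz _ htm] at h2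
  have hdo : DifferentiableOn ℝ g I := fun t ht =>
    ((key t ht).differentiableAt).differentiableWithinAt
  apply hIconv.is_const_of_fderivWithin_eq_zero hdo _ hu hu0
  intro x hx
  rw [(key x hx).differentiableAt.fderivWithin (hIopen.uniqueDiffOn x hx)]
  ext t
  simp [(key x hx).deriv, ← toSpanSingleton_deriv]

private lemma exp_log_form {a s : ℝ} (ha : 0 < a) (hs : 0 < s) :
    Real.exp (Real.log a + (1 / 2) * Real.log s) = a * Real.sqrt s := by
  rw [Real.exp_add, Real.exp_log ha]
  congr 1
  rw [show (1 / 2 : ℝ) * Real.log s = Real.log (Real.sqrt s) by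
    rw [Real.log_sqrt hs.le]; ring]
  exact Real.exp_log (Real.sqrt_pos.mpr hs)

theorem separation_of_variables_for_canonical_parameters
    (I J : Set ℝ) (hIopen : IsOpen I) (hJopen : IsOpen J)
    (hIconn : I.OrdConnected) (hJconn : J.OrdConnected)
    (E G μ ν : ℝ × ℝ → ℝ)
    (hE : ContDiffOn ℝ (⊤ : ℕ∞) E (I ×ˢ J)) (hG : ContDiffOn ℝ (⊤ : ℕ∞) G (I ×ˢ J))
    (hμ : ContDiffOn ℝ (⊤ : ℕ∞) μ (I ×ˢ J)) (hν : ContDiffOn ℝ (⊤ : ℕ∞) ν (I ×ˢ J))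
    (hEneg : ∀ p ∈ I ×ˢ J, E p < 0) (hGpos : ∀ p ∈ I ×ˢ J, 0 < G p)
    (hpos : ∀ p ∈ I ×ˢ J, 0 < μ p ^ 2 + ν p ^ 2)
    (heq1 : ∀ p ∈ I ×ˢ J,
      pd2 (fun q => Real.log (Real.sqrt (-E q))) p =
        -(1 / 4) * pd2 (fun q => Real.log (μ q ^ 2 + ν q ^ 2)) p)
    (heq2 : ∀ p ∈ I ×ˢ J,
      pd1 (fun q => Real.log (Real.sqrt (G q))) p =
        -(1 / 4) * pd1 (fun q => Real.log (μ q ^ 2 + ν q ^ 2)) p) :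
    ∃ φ ψ : ℝ → ℝ,
      ContDiffOn ℝ (⊤ : ℕ∞) φ I ∧ ContDiffOn ℝ (⊤ : ℕ∞) ψ J ∧
      (∀ u ∈ I, 0 < φ u) ∧ (∀ v ∈ J, 0 < ψ v) ∧
      (∀ p ∈ I ×ˢ J,
        -E p * Real.sqrt (μ p ^ 2 + ν p ^ 2) = φ p.1 ∧
        G p * Real.sqrt (μ p ^ 2 + ν p ^ 2) = ψ p.2) := by
  rcases Set.eq_empty_or_nonempty (I ×ˢ J) with hemp | ⟨⟨u₀, v₀⟩, hp₀⟩
  · refine ⟨fun _ => 1, fun _ => 1, contDiffOn_const, contDiffOn_const,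
      fun _ _ => one_pos, fun _ _ => one_pos, fun p hp => ?_⟩
    rw [hemp] at hp; exact absurd hp (Set.notMem_empty p)
  obtain ⟨hu₀, hv₀⟩ : u₀ ∈ I ∧ v₀ ∈ J := hp₀
  set U := I ×ˢ J with hU
  have hUopen : IsOpen U := hIopen.prod hJopen
  set s : ℝ × ℝ → ℝ := fun p => μ p ^ 2 + ν p ^ 2 with hs_def
  have hsdiff : ∀ p ∈ U, DifferentiableAt ℝ s p := fun p hp =>
    (((hμ.contDiffAt (hUopen.mem_nhds hp)).differentiableAt (by simp)).pow 2).add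
      (((hν.contDiffAt (hUopen.mem_nhds hp)).differentiableAt (by simp)).pow 2)
  have hEdiff : ∀ p ∈ U, DifferentiableAt ℝ (fun q => -E q) p := fun p hp =>
    ((hE.contDiffAt (hUopen.mem_nhds hp)).differentiableAt (by simp)).neg
  have hGdiff : ∀ p ∈ U, DifferentiableAt ℝ G p := fun p hp =>
    (hG.contDiffAt (hUopen.mem_nhds hp)).differentiableAt (by simp)
  have hnEpos : ∀ p ∈ U, 0 < -E p := fun p hp => by linarith [hEneg p hp]
  -- log-combination functions
  set L₁ : ℝ × ℝ → ℝ := fun q => Real.log (-E q) + (1 / 2) * Real.log (s q) with hL1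
  set L₂ : ℝ × ℝ → ℝ := fun q => Real.log (G q) + (1 / 2) * Real.log (s q) with hL2
  have hz1 : ∀ p ∈ U, fderiv ℝ L₁ p (0, 1) = 0 :=
    log_fderiv_zero hUopen (fun q => -E q) s hEdiff hsdiff hnEpos hpos (0, 1) heq1
  have hz2 : ∀ p ∈ U, fderiv ℝ L₂ p (1, 0) = 0 :=
    log_fderiv_zero hUopen G s hGdiff hsdiff hGpos hpos (1, 0) heq2
  have hL1diff : ∀ p ∈ U, DifferentiableAt ℝ L₁ p := fun p hp =>
    (((Real.differentiableAt_log (ne_of_gt (hnEpos p hp))).comp p (hEdiff p hp))).add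
      (((Real.differentiableAt_log (ne_of_gt (hpos p hp))).comp p (hsdiff p hp)).const_mul _)
  have hL2diff : ∀ p ∈ U, DifferentiableAt ℝ L₂ p := fun p hp =>
    (((Real.differentiableAt_log (ne_of_gt (hGpos p hp))).comp p (hGdiff p hp))).add
      (((Real.differentiableAt_log (ne_of_gt (hpos p hp))).comp p (hsdiff p hp)).const_mul _)
  -- smoothness of the product functions
  have hsqrt : ∀ p ∈ U, ContDiffAt ℝ (⊤ : ℕ∞) (fun q => Real.sqrt (s q)) p := fun p hp =>
    (Real.contDiffAt_sqrt (ne_of_gt (hpos p hp))).comp p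
      (((hμ.contDiffAt (hUopen.mem_nhds hp)).pow 2).add
        ((hν.contDiffAt (hUopen.mem_nhds hp)).pow 2))
  have hH1 : ContDiffOn ℝ (⊤ : ℕ∞) (fun p => -E p * Real.sqrt (s p)) U := fun p hp =>
    (((hE.contDiffAt (hUopen.mem_nhds hp)).neg.mul (hsqrt p hp))).contDiffWithinAt
  have hH2 : ContDiffOn ℝ (⊤ : ℕ∞) (fun p => G p * Real.sqrt (s p)) U := fun p hp =>
    (((hG.contDiffAt (hUopen.mem_nhds hp)).mul (hsqrt p hp))).contDiffWithinAt
  refine ⟨fun u => -E (u, v₀) * Real.sqrt (s (u, v₀)),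
    fun v => G (u₀, v) * Real.sqrt (s (u₀, v)), ?_, ?_, ?_, ?_, ?_⟩
  · exact hH1.comp ((contDiff_id.prodMk contDiff_const).contDiffOn)
      (fun u hu => Set.mk_mem_prod hu hv₀)
  · exact hH2.comp ((contDiff_const.prodMk contDiff_id).contDiffOn)
      (fun v hv => Set.mk_mem_prod hu₀ hv)
  · intro u hu
    exact mul_pos (hnEpos _ ⟨hu, hv₀⟩) (Real.sqrt_pos.mpr (hpos _ ⟨hu, hv₀⟩))
  · intro v hv
    exact mul_pos (hGpos _ ⟨hu₀, hv⟩) (Real.sqrt_pos.mpr (hpos _ ⟨hu₀, hv⟩))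
  · rintro ⟨u, v⟩ hp
    obtain ⟨hu, hv⟩ : u ∈ I ∧ v ∈ J := hp
    constructor
    · have hc : L₁ (u, v) = L₁ (u, v₀) :=
        const_snd hJconn.convex hJopen L₁ hL1diff hz1 hu hv hv₀
      have e1 : Real.exp (L₁ (u, v)) = -E (u, v) * Real.sqrt (s (u, v)) :=
        exp_log_form (hnEpos _ ⟨hu, hv⟩) (hpos _ ⟨hu, hv⟩)
      have e2 : Real.exp (L₁ (u, v₀)) = -E (u, v₀) * Real.sqrt (s (u, v₀)) :=
        exp_log_form (hnEpos _ ⟨hu, hv₀⟩) (hpos _ ⟨hu, hv₀⟩)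
      calc -E (u, v) * Real.sqrt (s (u, v)) = Real.exp (L₁ (u, v)) := e1.symm
        _ = Real.exp (L₁ (u, v₀)) := by rw [hc]
        _ = -E (u, v₀) * Real.sqrt (s (u, v₀)) := e2
    · have hc : L₂ (u, v) = L₂ (u₀, v) :=
        const_fst hIconn.convex hIopen L₂ hL2diff hz2 hu hu₀ hv
      have e1 : Real.exp (L₂ (u, v)) = G (u, v) * Real.sqrt (s (u, v)) :=
        exp_log_form (hGpos _ ⟨hu, hv⟩) (hpos _ ⟨hu, hv⟩)
      have e2 : Real.exp (L₂ (u₀, v)) = G (u₀, v) * Real.sqrt (s (u₀, v)) :=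
        exp_log_form (hGpos _ ⟨hu₀, hv⟩) (hpos _ ⟨hu₀, hv⟩)
      calc G (u, v) * Real.sqrt (s (u, v)) = Real.exp (L₂ (u, v)) := e1.symm
        _ = Real.exp (L₂ (u₀, v)) := by rw [hc]
        _ = G (u₀, v) * Real.sqrt (s (u₀, v)) := e2
end

section
/- Let α, β > 0 and let f, g : J → ℝ be smooth functions on an open interval J with g'² − f'² > 0 and α²f² + β²g² > 0 on J, and let z, n₁, n₂ be as in the Moore rotational surface setup. Then ⟨z_uu, n₂⟩ = 0, ⟨z_vv, n₂⟩ = 0, ⟨z_uu, n₁⟩ = (g'f'' − f'g'')/√(g'² − f'²), and ⟨z_vv, n₁⟩ = −(α²f g' + β²g f')/√(g'² − f'²). Consequently, the zero mean curvature condition G·⟨z_uu, n_i⟩ + E·⟨z_vv, n_i⟩ = 0 for i = 1, 2 (with E = f'² − g'², G = α²f² + β²g²) holds at u ∈ J if and only if −(g'f'' − f'g'')/(g'² − f'²) = (α²f g' + β²g f')/(α²f² + β²g²) at u. -/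
/-- The Minkowski inner product of signature (3,1) on ℝ⁴. -/
def mink (x y : Fin 4 → ℝ) : ℝ := x 0 * y 0 + x 1 * y 1 + x 2 * y 2 - x 3 * y 3

/-- Partial derivative of an ℝ⁴-valued map with respect to the first variable. -/
noncomputable def Du (z : ℝ × ℝ → Fin 4 → ℝ) (p : ℝ × ℝ) : Fin 4 → ℝ := fderiv ℝ z p (1, 0)

/-- Partial derivative of an ℝ⁴-valued map with respect to the second variable. -/
noncomputable def Dv (z : ℝ × ℝ → Fin 4 → ℝ) (p : ℝ × ℝ) : Fin 4 → ℝ := fderiv ℝ z p (0, 1)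

lemma hasFDerivAt_mul_prod {F T : ℝ → ℝ} {F' T' : ℝ} {p : ℝ × ℝ}
    (hF : HasDerivAt F F' p.1) (hT : HasDerivAt T T' p.2) :
    HasFDerivAt (fun q : ℝ × ℝ => F q.1 * T q.2)
      (F p.1 • (((1 : ℝ →L[ℝ] ℝ).smulRight T').comp (ContinuousLinearMap.snd ℝ ℝ ℝ)) +
       T p.2 • (((1 : ℝ →L[ℝ] ℝ).smulRight F').comp (ContinuousLinearMap.fst ℝ ℝ ℝ))) p :=
  (hF.hasFDerivAt.comp p hasFDerivAt_fst).mul (hT.hasFDerivAt.comp p hasFDerivAt_snd)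

lemma du_dv_pi {F T : Fin 4 → ℝ → ℝ} {F' T' : Fin 4 → ℝ} {p : ℝ × ℝ}
    (hF : ∀ i, HasDerivAt (F i) (F' i) p.1) (hT : ∀ i, HasDerivAt (T i) (T' i) p.2) :
    Du (fun q i => F i q.1 * T i q.2) p = (fun i => F' i * T i p.2) ∧
    Dv (fun q i => F i q.1 * T i q.2) p = (fun i => F i p.1 * T' i) := by
  have h : HasFDerivAt (fun (q : ℝ × ℝ) (i : Fin 4) => F i q.1 * T i q.2)
      (ContinuousLinearMap.pi fun i =>
        F i p.1 • (((1 : ℝ →L[ℝ] ℝ).smulRight (T' i)).comp (ContinuousLinearMap.snd ℝ ℝ ℝ)) +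
        T i p.2 • (((1 : ℝ →L[ℝ] ℝ).smulRight (F' i)).comp (ContinuousLinearMap.fst ℝ ℝ ℝ))) p :=
    hasFDerivAt_pi.2 fun i => hasFDerivAt_mul_prod (hF i) (hT i)
  constructor
  · rw [Du, h.fderiv]; funext i; simp; ring
  · rw [Dv, h.fderiv]; funext i; simp

lemma moore_derivs (α β : ℝ) (f g : ℝ → ℝ) {f' g' : ℝ} {p : ℝ × ℝ}
    (hfd : HasDerivAt f f' p.1) (hgd : HasDerivAt g g' p.1) :
    Du (fun q => ![f q.1 * Real.cos (α * q.2), f q.1 * Real.sin (α * q.2),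
        g q.1 * Real.sinh (β * q.2), g q.1 * Real.cosh (β * q.2)]) p
      = ![f' * Real.cos (α * p.2), f' * Real.sin (α * p.2),
          g' * Real.sinh (β * p.2), g' * Real.cosh (β * p.2)] ∧
    Dv (fun q => ![f q.1 * Real.cos (α * q.2), f q.1 * Real.sin (α * q.2),
        g q.1 * Real.sinh (β * q.2), g q.1 * Real.cosh (β * q.2)]) p
      = ![f p.1 * (-(α * Real.sin (α * p.2))), f p.1 * (α * Real.cos (α * p.2)),
          g p.1 * (β * Real.cosh (β * p.2)), g p.1 * (β * Real.sinh (β * p.2))] := by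
  have hid : ∀ (c : ℝ) (t : ℝ), HasDerivAt (fun s : ℝ => c * s) c t := fun c t => by
    simpa using (hasDerivAt_id t).const_mul c
  have hF : ∀ i : Fin 4, HasDerivAt (![f, f, g, g] i) (![f', f', g', g'] i) p.1 := by
    intro i; fin_cases i
    · simpa using hfd
    · simpa using hfd
    · simpa using hgd
    · simpa using hgd
  have hT : ∀ i : Fin 4,
      HasDerivAt (![fun t => Real.cos (α * t), fun t => Real.sin (α * t),
          fun t => Real.sinh (β * t), fun t => Real.cosh (β * t)] i)
        (![-(α * Real.sin (α * p.2)), α * Real.cos (α * p.2),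
          β * Real.cosh (β * p.2), β * Real.sinh (β * p.2)] i) p.2 := by
    intro i; fin_cases i
    · simpa using ((hid α p.2).cos).congr_deriv (by ring)
    · simpa using ((hid α p.2).sin).congr_deriv (by ring)
    · simpa using ((hid β p.2).sinh).congr_deriv (by ring)
    · simpa using ((hid β p.2).cosh).congr_deriv (by ring)
  have key := du_dv_pi hF hT
  have hfun : (fun q : ℝ × ℝ => ![f q.1 * Real.cos (α * q.2), f q.1 * Real.sin (α * q.2),
      g q.1 * Real.sinh (β * q.2), g q.1 * Real.cosh (β * q.2)])
      = (fun (q : ℝ × ℝ) (i : Fin 4) => ![f, f, g, g] i q.1 *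
          ![fun t => Real.cos (α * t), fun t => Real.sin (α * t),
            fun t => Real.sinh (β * t), fun t => Real.cosh (β * t)] i q.2) := by
    funext q i; fin_cases i <;> rfl
  rw [hfun]
  refine ⟨key.1.trans ?_, key.2.trans ?_⟩ <;> (funext i; fin_cases i <;> rfl)

lemma moore_dvv (α β : ℝ) (f g : ℝ → ℝ) {f' g' : ℝ} {p : ℝ × ℝ}
    (hfd : HasDerivAt f f' p.1) (hgd : HasDerivAt g g' p.1) :
    Dv (fun q => ![f q.1 * (-(α * Real.sin (α * q.2))), f q.1 * (α * Real.cos (α * q.2)),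
        g q.1 * (β * Real.cosh (β * q.2)), g q.1 * (β * Real.sinh (β * q.2))]) p
      = ![f p.1 * (-(α ^ 2 * Real.cos (α * p.2))), f p.1 * (-(α ^ 2 * Real.sin (α * p.2))),
          g p.1 * (β ^ 2 * Real.sinh (β * p.2)), g p.1 * (β ^ 2 * Real.cosh (β * p.2))] := by
  have hid : ∀ (c : ℝ) (t : ℝ), HasDerivAt (fun s : ℝ => c * s) c t := fun c t => by
    simpa using (hasDerivAt_id t).const_mul c
  have hF : ∀ i : Fin 4, HasDerivAt (![f, f, g, g] i) (![f', f', g', g'] i) p.1 := by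
    intro i; fin_cases i
    · simpa using hfd
    · simpa using hfd
    · simpa using hgd
    · simpa using hgd
  have hT : ∀ i : Fin 4,
      HasDerivAt (![fun t => -(α * Real.sin (α * t)), fun t => α * Real.cos (α * t),
          fun t => β * Real.cosh (β * t), fun t => β * Real.sinh (β * t)] i)
        (![-(α ^ 2 * Real.cos (α * p.2)), -(α ^ 2 * Real.sin (α * p.2)),
          β ^ 2 * Real.sinh (β * p.2), β ^ 2 * Real.cosh (β * p.2)] i) p.2 := by
    intro i; fin_cases i
    · simpa using (((hid α p.2).sin).const_mul α).fun_neg.congr_deriv (by ring)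
    · simpa using (((hid α p.2).cos).const_mul α).congr_deriv (by ring)
    · simpa using (((hid β p.2).cosh).const_mul β).congr_deriv (by ring)
    · simpa using (((hid β p.2).sinh).const_mul β).congr_deriv (by ring)
  have key := du_dv_pi hF hT
  have hfun : (fun q : ℝ × ℝ => ![f q.1 * (-(α * Real.sin (α * q.2))), f q.1 * (α * Real.cos (α * q.2)),
      g q.1 * (β * Real.cosh (β * q.2)), g q.1 * (β * Real.sinh (β * q.2))])
      = (fun (q : ℝ × ℝ) (i : Fin 4) => ![f, f, g, g] i q.1 *
          ![fun t => -(α * Real.sin (α * t)), fun t => α * Real.cos (α * t),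
            fun t => β * Real.cosh (β * t), fun t => β * Real.sinh (β * t)] i q.2) := by
    funext q i; fin_cases i <;> rfl
  rw [hfun]
  exact key.2.trans (by funext i; fin_cases i <;> rfl)

theorem moore_rotational_zero_mean_curvature_condition
    (α β : ℝ) (hα : 0 < α) (hβ : 0 < β)
    (J : Set ℝ) (hJopen : IsOpen J) (hJconn : J.OrdConnected)
    (f g : ℝ → ℝ) (hf : ContDiffOn ℝ (⊤ : ℕ∞) f J) (hg : ContDiffOn ℝ (⊤ : ℕ∞) g J)
    (hreg : ∀ u ∈ J, 0 < deriv g u ^ 2 - deriv f u ^ 2)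
    (hpos : ∀ u ∈ J, 0 < α ^ 2 * f u ^ 2 + β ^ 2 * g u ^ 2)
    (z n₁ n₂ : ℝ × ℝ → Fin 4 → ℝ)
    (hz : ∀ p : ℝ × ℝ, z p =
      ![f p.1 * Real.cos (α * p.2), f p.1 * Real.sin (α * p.2),
        g p.1 * Real.sinh (β * p.2), g p.1 * Real.cosh (β * p.2)])
    (hn₁ : ∀ p : ℝ × ℝ, n₁ p =
      (1 / Real.sqrt (deriv g p.1 ^ 2 - deriv f p.1 ^ 2)) •
        ![deriv g p.1 * Real.cos (α * p.2), deriv g p.1 * Real.sin (α * p.2),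
          deriv f p.1 * Real.sinh (β * p.2), deriv f p.1 * Real.cosh (β * p.2)])
    (hn₂ : ∀ p : ℝ × ℝ, n₂ p =
      (1 / Real.sqrt (α ^ 2 * f p.1 ^ 2 + β ^ 2 * g p.1 ^ 2)) •
        ![β * g p.1 * Real.sin (α * p.2), -(β * g p.1 * Real.cos (α * p.2)),
          α * f p.1 * Real.cosh (β * p.2), α * f p.1 * Real.sinh (β * p.2)]) :
    ∀ u ∈ J, ∀ v : ℝ,
      (mink (Du (Du z) (u, v)) (n₂ (u, v)) = 0 ∧
       mink (Dv (Dv z) (u, v)) (n₂ (u, v)) = 0 ∧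
       mink (Du (Du z) (u, v)) (n₁ (u, v)) =
         (deriv g u * deriv (deriv f) u - deriv f u * deriv (deriv g) u) /
           Real.sqrt (deriv g u ^ 2 - deriv f u ^ 2) ∧
       mink (Dv (Dv z) (u, v)) (n₁ (u, v)) =
         -(α ^ 2 * f u * deriv g u + β ^ 2 * g u * deriv f u) /
           Real.sqrt (deriv g u ^ 2 - deriv f u ^ 2)) ∧
      ((∀ i : Fin 2,
          (α ^ 2 * f u ^ 2 + β ^ 2 * g u ^ 2) *
              mink (Du (Du z) (u, v)) (![n₁, n₂] i (u, v)) +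
            (deriv f u ^ 2 - deriv g u ^ 2) *
              mink (Dv (Dv z) (u, v)) (![n₁, n₂] i (u, v)) = 0) ↔
        -(deriv g u * deriv (deriv f) u - deriv f u * deriv (deriv g) u) /
            (deriv g u ^ 2 - deriv f u ^ 2) =
          (α ^ 2 * f u * deriv g u + β ^ 2 * g u * deriv f u) /
            (α ^ 2 * f u ^ 2 + β ^ 2 * g u ^ 2)) := by
  intro u hu v
  have hfd : ∀ t ∈ J, HasDerivAt f (deriv f t) t := fun t ht =>
    ((hf.contDiffAt (hJopen.mem_nhds ht)).differentiableAt (by norm_num)).hasDerivAt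
  have hgd : ∀ t ∈ J, HasDerivAt g (deriv g t) t := fun t ht =>
    ((hg.contDiffAt (hJopen.mem_nhds ht)).differentiableAt (by norm_num)).hasDerivAt
  have hdf : ContDiffOn ℝ (⊤ : ℕ∞) (deriv f) J := hf.deriv_of_isOpen hJopen (by simp)
  have hdg : ContDiffOn ℝ (⊤ : ℕ∞) (deriv g) J := hg.deriv_of_isOpen hJopen (by simp)
  have hfd2 : HasDerivAt (deriv f) (deriv (deriv f) u) u :=
    ((hdf.contDiffAt (hJopen.mem_nhds hu)).differentiableAt (by norm_num)).hasDerivAt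
  have hgd2 : HasDerivAt (deriv g) (deriv (deriv g) u) u :=
    ((hdg.contDiffAt (hJopen.mem_nhds hu)).differentiableAt (by norm_num)).hasDerivAt
  have hzf : z = fun q : ℝ × ℝ => ![f q.1 * Real.cos (α * q.2), f q.1 * Real.sin (α * q.2),
      g q.1 * Real.sinh (β * q.2), g q.1 * Real.cosh (β * q.2)] := funext hz
  have hmem : {q : ℝ × ℝ | q.1 ∈ J} ∈ nhds ((u, v) : ℝ × ℝ) :=
    (hJopen.preimage continuous_fst).mem_nhds hu
  have hDuz : Du z =ᶠ[nhds ((u, v) : ℝ × ℝ)]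
      (fun q : ℝ × ℝ => ![deriv f q.1 * Real.cos (α * q.2), deriv f q.1 * Real.sin (α * q.2),
        deriv g q.1 * Real.sinh (β * q.2), deriv g q.1 * Real.cosh (β * q.2)]) := by
    filter_upwards [hmem] with q hq
    rw [hzf, Du]
    exact (moore_derivs α β f g (hfd q.1 hq) (hgd q.1 hq)).1
  have hDvz : Dv z =ᶠ[nhds ((u, v) : ℝ × ℝ)]
      (fun q : ℝ × ℝ => ![f q.1 * (-(α * Real.sin (α * q.2))), f q.1 * (α * Real.cos (α * q.2)),
        g q.1 * (β * Real.cosh (β * q.2)), g q.1 * (β * Real.sinh (β * q.2))]) := by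
    filter_upwards [hmem] with q hq
    rw [hzf, Dv]
    exact (moore_derivs α β f g (hfd q.1 hq) (hgd q.1 hq)).2
  have hDuu : Du (Du z) (u, v) =
      ![deriv (deriv f) u * Real.cos (α * v), deriv (deriv f) u * Real.sin (α * v),
        deriv (deriv g) u * Real.sinh (β * v), deriv (deriv g) u * Real.cosh (β * v)] := by
    show fderiv ℝ (Du z) (u, v) (1, 0) = _
    rw [hDuz.fderiv_eq]
    exact (moore_derivs α β (deriv f) (deriv g) hfd2 hgd2).1
  have hDvv : Dv (Dv z) (u, v) =
      ![f u * (-(α ^ 2 * Real.cos (α * v))), f u * (-(α ^ 2 * Real.sin (α * v))),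
        g u * (β ^ 2 * Real.sinh (β * v)), g u * (β ^ 2 * Real.cosh (β * v))] := by
    show fderiv ℝ (Dv z) (u, v) (0, 1) = _
    rw [hDvz.fderiv_eq]
    exact moore_dvv α β f g (hfd u hu) (hgd u hu)
  have hE := hreg u hu
  have hG := hpos u hu
  have hs : 0 < Real.sqrt (deriv g u ^ 2 - deriv f u ^ 2) := Real.sqrt_pos.2 hE
  have hs2 : Real.sqrt (deriv g u ^ 2 - deriv f u ^ 2) ^ 2 = deriv g u ^ 2 - deriv f u ^ 2 :=
    Real.sq_sqrt hE.le
  have hpy := Real.sin_sq_add_cos_sq (α * v)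
  have hhy := Real.cosh_sq_sub_sinh_sq (β * v)
  have m2u : mink (Du (Du z) (u, v)) (n₂ (u, v)) = 0 := by
    rw [hDuu, hn₂]
    simp only [mink, Matrix.cons_val_zero, Matrix.cons_val_one, Matrix.head_cons,
      Matrix.cons_val_two, Matrix.cons_val_three, Matrix.tail_cons, Pi.smul_apply, smul_eq_mul]
    ring
  have m2v : mink (Dv (Dv z) (u, v)) (n₂ (u, v)) = 0 := by
    rw [hDvv, hn₂]
    simp only [mink, Matrix.cons_val_zero, Matrix.cons_val_one, Matrix.head_cons,
      Matrix.cons_val_two, Matrix.cons_val_three, Matrix.tail_cons, Pi.smul_apply, smul_eq_mul]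
    ring
  have m1u : mink (Du (Du z) (u, v)) (n₁ (u, v)) =
      (deriv g u * deriv (deriv f) u - deriv f u * deriv (deriv g) u) /
        Real.sqrt (deriv g u ^ 2 - deriv f u ^ 2) := by
    rw [hDuu, hn₁]
    simp only [mink, Matrix.cons_val_zero, Matrix.cons_val_one, Matrix.head_cons,
      Matrix.cons_val_two, Matrix.cons_val_three, Matrix.tail_cons, Pi.smul_apply, smul_eq_mul]
    field_simp
    rw [mul_comm v β]
    linear_combination (deriv g u * deriv (deriv f) u) * hpy -
      (deriv f u * deriv (deriv g) u) * hhy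
  have m1v : mink (Dv (Dv z) (u, v)) (n₁ (u, v)) =
      -(α ^ 2 * f u * deriv g u + β ^ 2 * g u * deriv f u) /
        Real.sqrt (deriv g u ^ 2 - deriv f u ^ 2) := by
    rw [hDvv, hn₁]
    simp only [mink, Matrix.cons_val_zero, Matrix.cons_val_one, Matrix.head_cons,
      Matrix.cons_val_two, Matrix.cons_val_three, Matrix.tail_cons, Pi.smul_apply, smul_eq_mul]
    field_simp
    rw [mul_comm v β]
    linear_combination
      (-(α ^ 2 * f u * deriv g u)) * hpy +
      (-(β ^ 2 * g u * deriv f u)) * hhy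
  refine ⟨⟨m2u, m2v, m1u, m1v⟩, ?_⟩
  have hkey : (α ^ 2 * f u ^ 2 + β ^ 2 * g u ^ 2) *
        ((deriv g u * deriv (deriv f) u - deriv f u * deriv (deriv g) u) /
          Real.sqrt (deriv g u ^ 2 - deriv f u ^ 2)) +
      (deriv f u ^ 2 - deriv g u ^ 2) *
        (-(α ^ 2 * f u * deriv g u + β ^ 2 * g u * deriv f u) /
          Real.sqrt (deriv g u ^ 2 - deriv f u ^ 2)) =
      ((α ^ 2 * f u ^ 2 + β ^ 2 * g u ^ 2) *
          (deriv g u * deriv (deriv f) u - deriv f u * deriv (deriv g) u) -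
        (deriv f u ^ 2 - deriv g u ^ 2) *
          (α ^ 2 * f u * deriv g u + β ^ 2 * g u * deriv f u)) /
        Real.sqrt (deriv g u ^ 2 - deriv f u ^ 2) := by ring
  constructor
  · intro h
    have h0 := h 0
    simp only [Matrix.cons_val_zero] at h0
    rw [m1u, m1v, hkey] at h0
    have h1 := (div_eq_zero_iff.mp h0).resolve_right (ne_of_gt hs)
    rw [div_eq_div_iff (ne_of_gt hE) (ne_of_gt hG)]
    linear_combination -h1
  · intro h i
    rw [div_eq_div_iff (ne_of_gt hE) (ne_of_gt hG)] at h
    fin_cases i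
    · simp only [Fin.mk_zero, Fin.mk_one, Matrix.cons_val_zero]
      rw [m1u, m1v, hkey, div_eq_zero_iff]
      left
      linear_combination -h
    · simp only [Fin.mk_zero, Fin.mk_one, Matrix.cons_val_one, Matrix.head_cons, Matrix.cons_val_zero]
      rw [m2u, m2v]
      ring
end

section
/- Let α, β > 0 and let f, g : J → ℝ be C² functions on an open interval J with g'(u)² − f'(u)² = 1 and α²f(u)² + β²g(u)² > 0 for all u ∈ J, and suppose the zero mean curvature equation −(g'f'' − f'g'')/(g'² − f'²) = (α²f g' + β²g f')/(α²f² + β²g²) holds on J. Then the function u ↦ α²f(u)²g'(u)² + β²g(u)²f'(u)² has zero derivative on J, i.e. it is constant. -/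
/-!
Differentiating the arclength condition `g'² - f'² = 1` gives `g' g'' = f' f''`, so the
acceleration is normal to the velocity: `f'' = -k g'` and `g'' = -k f'` with
`k = f' g'' - g' f''`. Substituting into the derivative of
`A = α² f² g'² + β² g² f'²` leaves `2 f' g' (α² f g' + β² g f' - k (α² f² + β² g²))`,
which is exactly the zero mean curvature equation.
-/

open Filter Topology

noncomputable def mooreQuantity (α β : ℝ) (f g : ℝ → ℝ) (u : ℝ) : ℝ :=
  α ^ 2 * f u ^ 2 * deriv g u ^ 2 + β ^ 2 * g u ^ 2 * deriv f u ^ 2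

lemma mul_eq_mul_of_sq_sub_sq_eventually_const {p q : ℝ → ℝ} {p' q' u c : ℝ}
    (hp : HasDerivAt p p' u) (hq : HasDerivAt q q' u)
    (h : ∀ᶠ s in 𝓝 u, q s ^ 2 - p s ^ 2 = c) : q u * q' = p u * p' := by
  have hconst : HasDerivAt (fun s => q s ^ 2 - p s ^ 2) 0 u :=
    (hasDerivAt_const u c).congr_of_eventuallyEq h
  have := ((hq.fun_pow 2).sub (hp.fun_pow 2)).unique hconst
  norm_num at this
  linarith

lemma mooreQuantity_deriv_expr_eq_zero {α β x y x' y' x'' y'' : ℝ}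
    (harc : y' ^ 2 - x' ^ 2 = 1) (hacc : y' * y'' = x' * x'')
    (hmin : -(y' * x'' - x' * y'') * (α ^ 2 * x ^ 2 + β ^ 2 * y ^ 2) =
      α ^ 2 * x * y' + β ^ 2 * y * x') :
    α ^ 2 * x * x' * y' ^ 2 + α ^ 2 * x ^ 2 * y' * y'' +
      β ^ 2 * y * y' * x' ^ 2 + β ^ 2 * y ^ 2 * x' * x'' = 0 := by
  have hx'' : x'' = -y' * (x' * y'' - y' * x'') := by
    linear_combination -x'' * harc + x' * hacc
  have hy'' : y'' = -x' * (x' * y'' - y' * x'') := by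
    linear_combination -y'' * harc + y' * hacc
  linear_combination α ^ 2 * x ^ 2 * y' * hy'' + β ^ 2 * y ^ 2 * x' * hx'' - x' * y' * hmin

lemma hasDerivAt_mooreQuantity (α β : ℝ) {f g : ℝ → ℝ} {u : ℝ}
    (hf : DifferentiableAt ℝ f u) (hg : DifferentiableAt ℝ g u)
    (hf' : DifferentiableAt ℝ (deriv f) u) (hg' : DifferentiableAt ℝ (deriv g) u) :
    HasDerivAt (mooreQuantity α β f g)
      (2 * (α ^ 2 * f u * deriv f u * deriv g u ^ 2 +
        α ^ 2 * f u ^ 2 * deriv g u * deriv (deriv g) u +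
        β ^ 2 * g u * deriv g u * deriv f u ^ 2 +
        β ^ 2 * g u ^ 2 * deriv f u * deriv (deriv f) u)) u := by
  have hA := ((hf.hasDerivAt.fun_pow 2).const_mul (α ^ 2)).fun_mul (hg'.hasDerivAt.fun_pow 2)
  have hB := ((hg.hasDerivAt.fun_pow 2).const_mul (β ^ 2)).fun_mul (hf'.hasDerivAt.fun_pow 2)
  exact (hA.fun_add hB).congr_deriv (by norm_num; ring)

theorem moore_conserved_quantity_general
    (α β : ℝ)
    (J : Set ℝ) (hJopen : IsOpen J) (hJconn : J.OrdConnected)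
    (f g : ℝ → ℝ) (hf : ContDiffOn ℝ 2 f J) (hg : ContDiffOn ℝ 2 g J)
    (harc : ∀ u ∈ J, deriv g u ^ 2 - deriv f u ^ 2 = 1)
    (hpos : ∀ u ∈ J, 0 < α ^ 2 * f u ^ 2 + β ^ 2 * g u ^ 2)
    (hmin : ∀ u ∈ J,
      -(deriv g u * deriv (deriv f) u - deriv f u * deriv (deriv g) u) /
          (deriv g u ^ 2 - deriv f u ^ 2) =
        (α ^ 2 * f u * deriv g u + β ^ 2 * g u * deriv f u) /
          (α ^ 2 * f u ^ 2 + β ^ 2 * g u ^ 2)) :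
    (∀ u ∈ J,
      deriv (fun s => α ^ 2 * f s ^ 2 * deriv g s ^ 2 + β ^ 2 * g s ^ 2 * deriv f s ^ 2) u
        = 0) ∧
    (∀ u₁ ∈ J, ∀ u₂ ∈ J,
      α ^ 2 * f u₁ ^ 2 * deriv g u₁ ^ 2 + β ^ 2 * g u₁ ^ 2 * deriv f u₁ ^ 2 =
        α ^ 2 * f u₂ ^ 2 * deriv g u₂ ^ 2 + β ^ 2 * g u₂ ^ 2 * deriv f u₂ ^ 2) := by
  have hf' : ContDiffOn ℝ 1 (deriv f) J := hf.deriv_of_isOpen hJopen (by norm_num)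
  have hg' : ContDiffOn ℝ 1 (deriv g) J := hg.deriv_of_isOpen hJopen (by norm_num)
  have hA : ∀ u ∈ J, HasDerivAt (mooreQuantity α β f g) 0 u := by
    intro u hu
    have hdiff {φ : ℝ → ℝ} {n : WithTop ℕ∞} (hφ : ContDiffOn ℝ n φ J) (hn : n ≠ 0) :
        DifferentiableAt ℝ φ u :=
      (hφ.contDiffAt (hJopen.mem_nhds hu)).differentiableAt hn
    have hacc := mul_eq_mul_of_sq_sub_sq_eventually_const (hdiff hf' one_ne_zero).hasDerivAt
      (hdiff hg' one_ne_zero).hasDerivAt (eventually_of_mem (hJopen.mem_nhds hu) harc)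
    have hmin' := hmin u hu
    rw [harc u hu, div_one, eq_div_iff (hpos u hu).ne'] at hmin'
    simpa only [mooreQuantity_deriv_expr_eq_zero (harc u hu) hacc hmin', mul_zero] using
      hasDerivAt_mooreQuantity α β (hdiff hf two_ne_zero) (hdiff hg two_ne_zero)
        (hdiff hf' one_ne_zero) (hdiff hg' one_ne_zero)
  refine ⟨fun u hu => (hA u hu).deriv, fun u₁ hu₁ u₂ hu₂ => ?_⟩
  exact hJopen.is_const_of_deriv_eq_zero hJconn.isPreconnected
    (fun u hu => (hA u hu).differentiableAt.differentiableWithinAt)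
    (fun u hu => (hA u hu).deriv) hu₁ hu₂

theorem moore_conserved_quantity
    (α β : ℝ) (hα : 0 < α) (hβ : 0 < β)
    (J : Set ℝ) (hJopen : IsOpen J) (hJconn : J.OrdConnected)
    (f g : ℝ → ℝ) (hf : ContDiffOn ℝ 2 f J) (hg : ContDiffOn ℝ 2 g J)
    (harc : ∀ u ∈ J, deriv g u ^ 2 - deriv f u ^ 2 = 1)
    (hpos : ∀ u ∈ J, 0 < α ^ 2 * f u ^ 2 + β ^ 2 * g u ^ 2)
    (hmin : ∀ u ∈ J,
      -(deriv g u * deriv (deriv f) u - deriv f u * deriv (deriv g) u) /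
          (deriv g u ^ 2 - deriv f u ^ 2) =
        (α ^ 2 * f u * deriv g u + β ^ 2 * g u * deriv f u) /
          (α ^ 2 * f u ^ 2 + β ^ 2 * g u ^ 2)) :
    (∀ u ∈ J,
      deriv (fun s => α ^ 2 * f s ^ 2 * deriv g s ^ 2 + β ^ 2 * g s ^ 2 * deriv f s ^ 2) u
        = 0) ∧
    (∀ u₁ ∈ J, ∀ u₂ ∈ J,
      α ^ 2 * f u₁ ^ 2 * deriv g u₁ ^ 2 + β ^ 2 * g u₁ ^ 2 * deriv f u₁ ^ 2 =
        α ^ 2 * f u₂ ^ 2 * deriv g u₂ ^ 2 + β ^ 2 * g u₂ ^ 2 * deriv f u₂ ^ 2) :=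
  moore_conserved_quantity_general α β J hJopen hJconn f g hf hg harc hpos hmin
end

section
/- Let α, β > 0 and let f, g : J → ℝ be C² functions on an open interval J with g'(u)² − f'(u)² = 1, α²f(u)² + β²g(u)² > 0, and f'(u) ≠ 0 for all u ∈ J. Then the zero mean curvature equation −(g'f'' − f'g'')/(g'² − f'²) = (α²f g' + β²g f')/(α²f² + β²g²) holds on J if and only if there exists a constant A > 0 such that f'(u)² = (A − α²f(u)²)/(α²f(u)² + β²g(u)²) and g'(u)² = (A + β²g(u)²)/(α²f(u)² + β²g(u)²) for all u ∈ J. -/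
/-!
Along the meridian, `F = f'² (α² f² + β² g²) + α² f²` has derivative `2 f' E`, where `E` vanishes
exactly when the mean curvature does (after using `g'² - f'² = 1` and its derivative
`g' g'' = f' f''`). As `f' ≠ 0`, zero mean curvature on the interval `J` is equivalent to `F` being
constant on `J`; the constant `A = F` is positive, and the two first integrals are `F = A` solved
for `f'²` and, via `g'² = 1 + f'²`, for `g'²`.
-/

open Filter Topology

theorem mul_deriv_eq_mul_deriv_of_sq_sub_sq_eventuallyEq {p q : ℝ → ℝ} {u c : ℝ}
    (hp : DifferentiableAt ℝ p u) (hq : DifferentiableAt ℝ q u)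
    (h : ∀ᶠ x in 𝓝 u, p x ^ 2 - q x ^ 2 = c) :
    p u * deriv p u = q u * deriv q u := by
  have hderiv := (hp.hasDerivAt.fun_pow 2).fun_sub (hq.hasDerivAt.fun_pow 2)
  have hzero : HasDerivAt (fun x => p x ^ 2 - q x ^ 2) 0 u :=
    (hasDerivAt_const u c).congr_of_eventuallyEq h
  have hsum := hderiv.unique hzero
  norm_num at hsum
  linarith

theorem IsOpen.forall_eq_zero_iff_is_const_of_hasDerivAt_smul {𝕜 G : Type*} [RCLike 𝕜]
    [NormedAddCommGroup G] [NormedSpace 𝕜 G] {s : Set 𝕜} {F E : 𝕜 → G} {c : 𝕜 → 𝕜}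
    (hs : IsOpen s) (hs' : IsPreconnected s) (hF : ∀ x ∈ s, HasDerivAt F (c x • E x) x)
    (hc : ∀ x ∈ s, c x ≠ 0) :
    (∀ x ∈ s, E x = 0) ↔ ∀ x ∈ s, ∀ y ∈ s, F x = F y := by
  constructor
  · intro hE x hx y hy
    refine hs.is_const_of_deriv_eq_zero hs'
      (fun z hz => (hF z hz).differentiableAt.differentiableWithinAt) (fun z hz => ?_) hx hy
    simp [(hF z hz).deriv, hE z hz]
  · intro hconst x hx
    have hzero : HasDerivAt F 0 x :=
      (hasDerivAt_const x (F x)).congr_of_eventuallyEq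
        (eventually_of_mem (hs.mem_nhds hx) fun y hy => hconst y hy x hx)
    exact (smul_eq_zero.mp ((hF x hx).unique hzero)).resolve_left (hc x hx)

theorem ContDiffOn.differentiableAt_deriv {f : ℝ → ℝ} {s : Set ℝ} {x : ℝ}
    (hf : ContDiffOn ℝ 2 f s) (hs : IsOpen s) (hx : x ∈ s) :
    DifferentiableAt ℝ (deriv f) x :=
  ((hf.deriv_of_isOpen hs (by norm_num : (1 : WithTop ℕ∞) + 1 ≤ 2)).contDiffAt
    (hs.mem_nhds hx)).differentiableAt one_ne_zero

section Moore

variable (α β : ℝ) (f g : ℝ → ℝ)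

noncomputable def meridianFirstIntegral (u : ℝ) : ℝ :=
  deriv f u ^ 2 * (α ^ 2 * f u ^ 2 + β ^ 2 * g u ^ 2) + α ^ 2 * f u ^ 2

noncomputable def minimalDefect (u : ℝ) : ℝ :=
  deriv (deriv f) u * (α ^ 2 * f u ^ 2 + β ^ 2 * g u ^ 2) +
    α ^ 2 * f u * deriv g u ^ 2 + β ^ 2 * g u * deriv f u * deriv g u

variable {α β f g} {u : ℝ}

theorem hasDerivAt_meridianFirstIntegral (hf : DifferentiableAt ℝ f u)
    (hg : DifferentiableAt ℝ g u) (hf' : DifferentiableAt ℝ (deriv f) u)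
    (harc : deriv g u ^ 2 - deriv f u ^ 2 = 1) :
    HasDerivAt (meridianFirstIntegral α β f g) (2 * deriv f u * minimalDefect α β f g u) u := by
  have hf2 := (hf.hasDerivAt.fun_pow 2).const_mul (α ^ 2)
  have hg2 := (hg.hasDerivAt.fun_pow 2).const_mul (β ^ 2)
  refine (((hf'.hasDerivAt.fun_pow 2).fun_mul (hf2.fun_add hg2)).fun_add hf2).congr_deriv ?_
  simp only [minimalDefect]
  push_cast
  linear_combination (-2 * α ^ 2 * f u * deriv f u) * harc

theorem minimal_iff_minimalDefect_eq_zero (harc : deriv g u ^ 2 - deriv f u ^ 2 = 1)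
    (harc_deriv : deriv g u * deriv (deriv g) u = deriv f u * deriv (deriv f) u)
    (hD : α ^ 2 * f u ^ 2 + β ^ 2 * g u ^ 2 ≠ 0) :
    -(deriv g u * deriv (deriv f) u - deriv f u * deriv (deriv g) u) /
          (deriv g u ^ 2 - deriv f u ^ 2) =
        (α ^ 2 * f u * deriv g u + β ^ 2 * g u * deriv f u) /
          (α ^ 2 * f u ^ 2 + β ^ 2 * g u ^ 2) ↔
      minimalDefect α β f g u = 0 := by
  have hg' : deriv g u ≠ 0 := by
    intro h
    nlinarith [sq_nonneg (deriv f u)]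
  rw [harc, div_one, eq_div_iff hD, minimalDefect]
  constructor
  · intro h
    linear_combination (-(deriv g u)) * h
      - deriv (deriv f) u * (α ^ 2 * f u ^ 2 + β ^ 2 * g u ^ 2) * harc
      + deriv f u * (α ^ 2 * f u ^ 2 + β ^ 2 * g u ^ 2) * harc_deriv
  · intro h
    apply mul_left_cancel₀ hg'
    linear_combination deriv f u * (α ^ 2 * f u ^ 2 + β ^ 2 * g u ^ 2) * harc_deriv
      - deriv (deriv f) u * (α ^ 2 * f u ^ 2 + β ^ 2 * g u ^ 2) * harc - h

theorem meridianFirstIntegral_pos (hD : 0 < α ^ 2 * f u ^ 2 + β ^ 2 * g u ^ 2)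
    (hf' : deriv f u ≠ 0) : 0 < meridianFirstIntegral α β f g u := by
  unfold meridianFirstIntegral
  positivity

theorem first_integrals_iff_meridianFirstIntegral_eq {A : ℝ}
    (harc : deriv g u ^ 2 - deriv f u ^ 2 = 1) (hD : α ^ 2 * f u ^ 2 + β ^ 2 * g u ^ 2 ≠ 0) :
    (deriv f u ^ 2 = (A - α ^ 2 * f u ^ 2) / (α ^ 2 * f u ^ 2 + β ^ 2 * g u ^ 2) ∧
      deriv g u ^ 2 = (A + β ^ 2 * g u ^ 2) / (α ^ 2 * f u ^ 2 + β ^ 2 * g u ^ 2)) ↔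
      meridianFirstIntegral α β f g u = A := by
  rw [eq_div_iff hD, eq_div_iff hD, meridianFirstIntegral]
  constructor
  · rintro ⟨h, -⟩
    linear_combination h
  · intro h
    exact ⟨by linear_combination h,
      by linear_combination h + (α ^ 2 * f u ^ 2 + β ^ 2 * g u ^ 2) * harc⟩

end Moore

theorem moore_zero_mean_curvature_iff_first_integrals_general
    (α β : ℝ)
    (J : Set ℝ) (hJopen : IsOpen J) (hJconn : J.OrdConnected)
    (f g : ℝ → ℝ) (hf : ContDiffOn ℝ 2 f J) (hg : ContDiffOn ℝ 2 g J)
    (harc : ∀ u ∈ J, deriv g u ^ 2 - deriv f u ^ 2 = 1)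
    (hpos : ∀ u ∈ J, 0 < α ^ 2 * f u ^ 2 + β ^ 2 * g u ^ 2)
    (hf' : ∀ u ∈ J, deriv f u ≠ 0) :
    (∀ u ∈ J,
      -(deriv g u * deriv (deriv f) u - deriv f u * deriv (deriv g) u) /
          (deriv g u ^ 2 - deriv f u ^ 2) =
        (α ^ 2 * f u * deriv g u + β ^ 2 * g u * deriv f u) /
          (α ^ 2 * f u ^ 2 + β ^ 2 * g u ^ 2)) ↔
    (∃ A : ℝ, 0 < A ∧ ∀ u ∈ J,
      deriv f u ^ 2 =
        (A - α ^ 2 * f u ^ 2) / (α ^ 2 * f u ^ 2 + β ^ 2 * g u ^ 2) ∧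
      deriv g u ^ 2 =
        (A + β ^ 2 * g u ^ 2) / (α ^ 2 * f u ^ 2 + β ^ 2 * g u ^ 2)) := by
  have hdiff : ∀ {φ : ℝ → ℝ}, ContDiffOn ℝ 2 φ J → ∀ u ∈ J, DifferentiableAt ℝ φ u :=
    fun hφ u hu => (hφ.contDiffAt (hJopen.mem_nhds hu)).differentiableAt two_ne_zero
  have harc_deriv : ∀ u ∈ J, deriv g u * deriv (deriv g) u = deriv f u * deriv (deriv f) u :=
    fun u hu => mul_deriv_eq_mul_deriv_of_sq_sub_sq_eventuallyEq
      (hg.differentiableAt_deriv hJopen hu) (hf.differentiableAt_deriv hJopen hu)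
      (eventually_of_mem (hJopen.mem_nhds hu) harc)
  have hdefect : (∀ u ∈ J, minimalDefect α β f g u = 0) ↔
      ∀ u ∈ J, ∀ v ∈ J, meridianFirstIntegral α β f g u = meridianFirstIntegral α β f g v :=
    hJopen.forall_eq_zero_iff_is_const_of_hasDerivAt_smul hJconn.isPreconnected
      (fun u hu => hasDerivAt_meridianFirstIntegral (hdiff hf u hu) (hdiff hg u hu)
        (hf.differentiableAt_deriv hJopen hu) (harc u hu))
      (fun u hu => mul_ne_zero two_ne_zero (hf' u hu))
  have hfirst : ∀ A, ∀ u ∈ J, _ ↔ meridianFirstIntegral α β f g u = A := fun A u hu =>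
    first_integrals_iff_meridianFirstIntegral_eq (A := A) (harc u hu) (hpos u hu).ne'
  rw [forall₂_congr fun u hu => minimal_iff_minimalDefect_eq_zero (harc u hu) (harc_deriv u hu)
    (hpos u hu).ne', hdefect]
  constructor
  · intro hconst
    rcases J.eq_empty_or_nonempty with rfl | ⟨u₀, hu₀⟩
    · exact ⟨1, one_pos, by simp⟩
    exact ⟨_, meridianFirstIntegral_pos (hpos u₀ hu₀) (hf' u₀ hu₀),
      fun u hu => (hfirst _ u hu).2 (hconst u hu u₀ hu₀)⟩
  · rintro ⟨A, -, hA⟩ u hu v hv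
    rw [(hfirst A u hu).1 (hA u hu), (hfirst A v hv).1 (hA v hv)]

theorem moore_zero_mean_curvature_iff_first_integrals
    (α β : ℝ) (hα : 0 < α) (hβ : 0 < β)
    (J : Set ℝ) (hJopen : IsOpen J) (hJconn : J.OrdConnected)
    (f g : ℝ → ℝ) (hf : ContDiffOn ℝ 2 f J) (hg : ContDiffOn ℝ 2 g J)
    (harc : ∀ u ∈ J, deriv g u ^ 2 - deriv f u ^ 2 = 1)
    (hpos : ∀ u ∈ J, 0 < α ^ 2 * f u ^ 2 + β ^ 2 * g u ^ 2)
    (hf' : ∀ u ∈ J, deriv f u ≠ 0) :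
    (∀ u ∈ J,
      -(deriv g u * deriv (deriv f) u - deriv f u * deriv (deriv g) u) /
          (deriv g u ^ 2 - deriv f u ^ 2) =
        (α ^ 2 * f u * deriv g u + β ^ 2 * g u * deriv f u) /
          (α ^ 2 * f u ^ 2 + β ^ 2 * g u ^ 2)) ↔
    (∃ A : ℝ, 0 < A ∧ ∀ u ∈ J,
      deriv f u ^ 2 =
        (A - α ^ 2 * f u ^ 2) / (α ^ 2 * f u ^ 2 + β ^ 2 * g u ^ 2) ∧
      deriv g u ^ 2 =
        (A + β ^ 2 * g u ^ 2) / (α ^ 2 * f u ^ 2 + β ^ 2 * g u ^ 2)) :=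
  moore_zero_mean_curvature_iff_first_integrals_general α β J hJopen hJconn f g hf hg harc hpos hf'
end

section
/- Let A > 0, α, β > 0, ε = ±1, and let f, g : J → ℝ be differentiable functions on an interval J with A − α²f(u)² > 0 and f'(u)/√(A − α²f(u)²) = ε·g'(u)/√(A + β²g(u)²) for all u ∈ J. Then there exists a constant C ∈ ℝ such that arcsin(α f(u)/√A) = ε·(α/β)·ln(β g(u) + √(β²g(u)² + A)) + C for all u ∈ J. -/
/-!
Since `log (y + √(y ^ 2 + A)) = arsinh (y / √A) + log √A`, the claim says that
`arcsin (α f / √A) - ε (α / β) arsinh (β g / √A)` is constant on `J`. Its derivative is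
`α f' / √(A - α² f²) - ε α g' / √(A + β² g²)`, which vanishes by the hypothesis, and `J` is an
open interval.
-/

open Real

theorem Real.sqrt_mul_sqrt_one_add_div {a : ℝ} (ha : 0 < a) (b : ℝ) :
    √a * √(1 + b / a) = √(a + b) := by
  rw [← sqrt_mul ha.le, mul_add, mul_one, mul_div_cancel₀ b ha.ne']

theorem Real.log_add_sqrt_sq_add_eq_arsinh {a : ℝ} (ha : 0 < a) (y : ℝ) :
    log (y + √(y ^ 2 + a)) = arsinh (y / √a) + log √a := by
  have hsa : 0 < √a := sqrt_pos.mpr ha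
  have hfactor : y + √(y ^ 2 + a) = √a * exp (arsinh (y / √a)) := by
    rw [exp_arsinh, mul_add, mul_div_cancel₀ y hsa.ne', div_pow, sq_sqrt ha.le,
      sqrt_mul_sqrt_one_add_div ha, add_comm a]
  rw [hfactor, log_mul hsa.ne' (exp_pos _).ne', log_exp, add_comm]

theorem HasDerivAt.arcsin_div_sqrt {f : ℝ → ℝ} {f' u A : ℝ} (hf : HasDerivAt f f' u)
    (hfA : f u ^ 2 < A) :
    HasDerivAt (fun x => arcsin (f x / √A)) (f' / √(A - f u ^ 2)) u := by
  have hA : 0 < A := (sq_nonneg _).trans_lt hfA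
  have hsA : 0 < √A := sqrt_pos.mpr hA
  have hbound : |f u / √A| < 1 := by
    rw [← sq_lt_one_iff_abs_lt_one, div_pow, sq_sqrt hA.le, div_lt_one hA]
    exact hfA
  obtain ⟨hlow, hhigh⟩ := abs_lt.mp hbound
  have hscale : √A * √(1 - (f u / √A) ^ 2) = √(A - f u ^ 2) := by
    rw [div_pow, sq_sqrt hA.le, sub_eq_add_neg, ← neg_div, sqrt_mul_sqrt_one_add_div hA,
      ← sub_eq_add_neg]
  refine ((hasDerivAt_arcsin hlow.ne' hhigh.ne).comp u (hf.div_const √A)).congr_deriv ?_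
  rw [← hscale]
  field_simp

theorem HasDerivAt.arsinh_div_sqrt {g : ℝ → ℝ} {g' u A : ℝ} (hg : HasDerivAt g g' u)
    (hA : 0 < A) :
    HasDerivAt (fun x => Real.arsinh (g x / √A)) (g' / √(A + g u ^ 2)) u := by
  have hsA : 0 < √A := sqrt_pos.mpr hA
  have hscale : √A * √(1 + (g u / √A) ^ 2) = √(A + g u ^ 2) := by
    rw [div_pow, sq_sqrt hA.le, sqrt_mul_sqrt_one_add_div hA]
  refine (hg.div_const √A).arsinh.congr_deriv ?_
  rw [← hscale, smul_eq_mul]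
  field_simp

theorem moore_meridian_integration_general
    (A α β ε : ℝ) (hA : 0 < A) (hβ : 0 < β)
    (J : Set ℝ) (hJopen : IsOpen J) (hJconn : J.OrdConnected)
    (f g : ℝ → ℝ)
    (hf : ∀ u ∈ J, DifferentiableAt ℝ f u)
    (hg : ∀ u ∈ J, DifferentiableAt ℝ g u)
    (hA' : ∀ u ∈ J, 0 < A - α ^ 2 * f u ^ 2)
    (hode : ∀ u ∈ J,
      deriv f u / Real.sqrt (A - α ^ 2 * f u ^ 2) =
        ε * (deriv g u / Real.sqrt (A + β ^ 2 * g u ^ 2))) :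
    ∃ C : ℝ, ∀ u ∈ J,
      Real.arcsin (α * f u / Real.sqrt A) =
        ε * (α / β) * Real.log (β * g u + Real.sqrt (β ^ 2 * g u ^ 2 + A)) + C := by
  set F : ℝ → ℝ := fun u => arcsin (α * f u / √A) - ε * (α / β) * arsinh (β * g u / √A)
  have hF : ∀ u ∈ J, HasDerivAt F 0 u := by
    intro u hu
    have harcsin := HasDerivAt.arcsin_div_sqrt ((hf u hu).hasDerivAt.const_mul α)
      (show (α * f u) ^ 2 < A by rw [mul_pow]; linarith [hA' u hu])
    have harsinh := HasDerivAt.arsinh_div_sqrt ((hg u hu).hasDerivAt.const_mul β) hA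
    refine (harcsin.sub (harsinh.const_mul (ε * (α / β)))).congr_deriv ?_
    rw [mul_pow, mul_pow, mul_div_assoc, hode u hu]
    field_simp
    ring
  obtain ⟨C, hC⟩ := hJopen.exists_is_const_of_deriv_eq_zero hJconn.isPreconnected
    (fun u hu => (hF u hu).differentiableAt.differentiableWithinAt)
    (fun u hu => (hF u hu).deriv)
  refine ⟨C - ε * (α / β) * log √A, fun u hu => ?_⟩
  rw [← mul_pow, log_add_sqrt_sq_add_eq_arsinh hA, ← hC u hu]
  ring

theorem moore_meridian_integration
    (A α β ε : ℝ) (hA : 0 < A) (hα : 0 < α) (hβ : 0 < β)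
    (hε : ε = 1 ∨ ε = -1)
    (J : Set ℝ) (hJopen : IsOpen J) (hJconn : J.OrdConnected)
    (f g : ℝ → ℝ)
    (hf : ∀ u ∈ J, DifferentiableAt ℝ f u)
    (hg : ∀ u ∈ J, DifferentiableAt ℝ g u)
    (hA' : ∀ u ∈ J, 0 < A - α ^ 2 * f u ^ 2)
    (hode : ∀ u ∈ J,
      deriv f u / Real.sqrt (A - α ^ 2 * f u ^ 2) =
        ε * (deriv g u / Real.sqrt (A + β ^ 2 * g u ^ 2))) :
    ∃ C : ℝ, ∀ u ∈ J,
      Real.arcsin (α * f u / Real.sqrt A) =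
        ε * (α / β) * Real.log (β * g u + Real.sqrt (β ^ 2 * g u ^ 2 + A)) + C :=
  moore_meridian_integration_general A α β ε hA hβ J hJopen hJconn f g hf hg hA' hode
end

section
/- Let D ⊆ ℝ² be open and let X, Y : D → ℝ be C² functions with Y(u,v) ∈ (−π/2, π/2) for all (u,v) ∈ D. Define K = e^{2X}·cos Y and κ = e^{2X}·sin Y (so K > 0). Then the pair of equations (K² + κ²)^{1/4}·Δʰ ln (K² + κ²)^{1/8} = K and (K² + κ²)^{1/4}·Δʰ arctan(κ/K) = 2κ holds on D if and only if the pair of equations Δʰ X = 2e^{X}·cos Y and Δʰ Y = 2e^{X}·sin Y holds on D. -/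
/-!
The substitution is polar coordinates for `(K, κ)`, with radius `e^{2X}` and angle `Y`. Hence
`(K² + κ²)^{1/4} = e^X`, `ln (K² + κ²)^{1/8} = X / 2`, and, since `cos Y > 0`,
`arctan (κ / K) = Y` near every point of `D`, which suffices because `Δʰ` is local.
Substituting, the two natural equations become `e^X Δʰ X / 2 = e^{2X} cos Y` and
`e^X Δʰ Y = 2 e^{2X} sin Y`; dividing by `e^X` gives the canonical form.
-/

open Real

lemma pd1_const_smul (c : ℝ) (f : ℝ × ℝ → ℝ) : pd1 (c • f) = c • pd1 f := by
  ext p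
  simp [pd1, fderiv_const_smul_field]

lemma pd2_const_smul (c : ℝ) (f : ℝ × ℝ → ℝ) : pd2 (c • f) = c • pd2 f := by
  ext p
  simp [pd2, fderiv_const_smul_field]

lemma lapH_const_smul (c : ℝ) (f : ℝ × ℝ → ℝ) : lapH (c • f) = c • lapH f := by
  ext p
  simp only [lapH, pd1_const_smul, pd2_const_smul, Pi.smul_apply, smul_eq_mul]
  ring

lemma Filter.EventuallyEq.lapH_eq {f g : ℝ × ℝ → ℝ} {p : ℝ × ℝ}
    (h : f =ᶠ[nhds p] g) : lapH f p = lapH g p := by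
  have h1 : pd1 f =ᶠ[nhds p] pd1 g :=
    h.eventuallyEq_nhds.mono fun q hq => by simp [pd1, hq.fderiv_eq]
  have h2 : pd2 f =ᶠ[nhds p] pd2 g :=
    h.eventuallyEq_nhds.mono fun q hq => by simp [pd2, hq.fderiv_eq]
  simp [lapH, pd1, pd2, h1.fderiv_eq, h2.fderiv_eq]

lemma exp_two_mul_polar_sq_add_sq (x y : ℝ) :
    (exp (2 * x) * cos y) ^ 2 + (exp (2 * x) * sin y) ^ 2 = exp (4 * x) := by
  rw [mul_pow, mul_pow, ← mul_add, cos_sq_add_sin_sq, mul_one, ← exp_nat_mul]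
  ring_nf

lemma exp_two_mul_polar_rpow_quarter (x y : ℝ) :
    ((exp (2 * x) * cos y) ^ 2 + (exp (2 * x) * sin y) ^ 2) ^ ((1 : ℝ) / 4) = exp x := by
  rw [exp_two_mul_polar_sq_add_sq, ← exp_mul]
  ring_nf

lemma log_exp_two_mul_polar_rpow_eighth (x y : ℝ) :
    log (((exp (2 * x) * cos y) ^ 2 + (exp (2 * x) * sin y) ^ 2) ^ ((1 : ℝ) / 8)) =
      2⁻¹ * x := by
  rw [exp_two_mul_polar_sq_add_sq, ← exp_mul, log_exp]
  ring

lemma arctan_exp_two_mul_polar {y : ℝ} (hy : y ∈ Set.Ioo (-(π / 2)) (π / 2)) (x : ℝ) :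
    arctan (exp (2 * x) * sin y / (exp (2 * x) * cos y)) = y := by
  rw [mul_div_mul_left _ _ (exp_ne_zero _), ← tan_eq_sin_div_cos, arctan_tan hy.1 hy.2]

lemma exp_mul_eq_exp_two_mul_mul_iff (x a b : ℝ) :
    exp x * a = exp (2 * x) * b ↔ a = exp x * b := by
  rw [two_mul, exp_add, mul_assoc, mul_right_inj' (exp_ne_zero x)]

theorem timelike_natural_system_iff_canonical_form_general
    (D : Set (ℝ × ℝ)) (hD : IsOpen D)
    (X Y : ℝ × ℝ → ℝ)
    (hY : ContDiffOn ℝ 2 Y D)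
    (hYrange : ∀ p ∈ D, Y p ∈ Set.Ioo (-(Real.pi / 2)) (Real.pi / 2))
    (K κ : ℝ × ℝ → ℝ)
    (hK : ∀ p, K p = Real.exp (2 * X p) * Real.cos (Y p))
    (hκ : ∀ p, κ p = Real.exp (2 * X p) * Real.sin (Y p)) :
    ((∀ p ∈ D,
        (K p ^ 2 + κ p ^ 2) ^ ((1 : ℝ) / 4) *
            lapH (fun q => Real.log ((K q ^ 2 + κ q ^ 2) ^ ((1 : ℝ) / 8))) p = K p) ∧
      (∀ p ∈ D,
        (K p ^ 2 + κ p ^ 2) ^ ((1 : ℝ) / 4) *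
            lapH (fun q => Real.arctan (κ q / K q)) p = 2 * κ p)) ↔
    ((∀ p ∈ D, lapH X p = 2 * Real.exp (X p) * Real.cos (Y p)) ∧
      (∀ p ∈ D, lapH Y p = 2 * Real.exp (X p) * Real.sin (Y p))) := by
  obtain rfl : K = _ := funext hK
  obtain rfl : κ = _ := funext hκ
  simp only [exp_two_mul_polar_rpow_quarter, log_exp_two_mul_polar_rpow_eighth]
  have hlog : lapH (fun q => 2⁻¹ * X q) = (2⁻¹ : ℝ) • lapH X := lapH_const_smul 2⁻¹ X
  have harctan : ∀ p ∈ D, lapH (fun q => arctan (exp (2 * X q) * sin (Y q) /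
      (exp (2 * X q) * cos (Y q)))) p = lapH Y p := by
    intro p hp
    have hYp : ∀ᶠ q in nhds p, Y q ∈ Set.Ioo (-(π / 2)) (π / 2) :=
      (hY.continuousOn.continuousAt (hD.mem_nhds hp)).eventually_mem
        (isOpen_Ioo.mem_nhds (hYrange p hp))
    exact Filter.EventuallyEq.lapH_eq (hYp.mono fun q hq => arctan_exp_two_mul_polar hq (X q))
  refine and_congr (forall₂_congr fun p _ => ?_) (forall₂_congr fun p hp => ?_)
  · rw [hlog, Pi.smul_apply, smul_eq_mul, exp_mul_eq_exp_two_mul_mul_iff]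
    constructor <;> intro h <;> linarith
  · rw [harctan p hp, mul_left_comm 2, exp_mul_eq_exp_two_mul_mul_iff]
    constructor <;> intro h <;> linarith

theorem timelike_natural_system_iff_canonical_form
    (D : Set (ℝ × ℝ)) (hD : IsOpen D)
    (X Y : ℝ × ℝ → ℝ)
    (hX : ContDiffOn ℝ 2 X D) (hY : ContDiffOn ℝ 2 Y D)
    (hYrange : ∀ p ∈ D, Y p ∈ Set.Ioo (-(Real.pi / 2)) (Real.pi / 2))
    (K κ : ℝ × ℝ → ℝ)
    (hK : ∀ p, K p = Real.exp (2 * X p) * Real.cos (Y p))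
    (hκ : ∀ p, κ p = Real.exp (2 * X p) * Real.sin (Y p)) :
    ((∀ p ∈ D,
        (K p ^ 2 + κ p ^ 2) ^ ((1 : ℝ) / 4) *
            lapH (fun q => Real.log ((K q ^ 2 + κ q ^ 2) ^ ((1 : ℝ) / 8))) p = K p) ∧
      (∀ p ∈ D,
        (K p ^ 2 + κ p ^ 2) ^ ((1 : ℝ) / 4) *
            lapH (fun q => Real.arctan (κ q / K q)) p = 2 * κ p)) ↔
    ((∀ p ∈ D, lapH X p = 2 * Real.exp (X p) * Real.cos (Y p)) ∧
      (∀ p ∈ D, lapH Y p = 2 * Real.exp (X p) * Real.sin (Y p))) :=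
  timelike_natural_system_iff_canonical_form_general D hD X Y hY hYrange K κ hK hκ
end

section
/- Let D ⊆ ℝ² be open and let X, Y : D → ℝ be C² functions. Define K = e^{2X}·cosh Y and κ = e^{2X}·sinh Y (so K² − κ² = e^{4X} > 0). Then the pair of equations (K² − κ²)^{1/4}·Δ ln (K² − κ²)^{1/8} = K and (K² − κ²)^{1/4}·Δ ln ((K − κ)/(K + κ)) = −4κ holds on D if and only if the pair of equations Δ X = 2e^{X}·cosh Y and Δ Y = 2e^{X}·sinh Y holds on D. -/
/-- The Laplace operator Δ = ∂²/∂u² + ∂²/∂v². -/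
noncomputable def lap (f : ℝ × ℝ → ℝ) (p : ℝ × ℝ) : ℝ := pd1 (pd1 f) p + pd2 (pd2 f) p

open Real

-- No differentiability hypothesis: if `f` is not differentiable, both sides are the junk value `0`.
lemma pd1_const_mul (c : ℝ) (f : ℝ × ℝ → ℝ) : pd1 (fun q => c * f q) = fun p => c * pd1 f p := by
  funext p
  change fderiv ℝ (c • f) p (1, 0) = _
  rw [fderiv_const_smul_field]
  rfl

lemma pd2_const_mul (c : ℝ) (f : ℝ × ℝ → ℝ) : pd2 (fun q => c * f q) = fun p => c * pd2 f p := by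
  funext p
  change fderiv ℝ (c • f) p (0, 1) = _
  rw [fderiv_const_smul_field]
  rfl

lemma lap_const_mul (c : ℝ) (f : ℝ × ℝ → ℝ) (p : ℝ × ℝ) :
    lap (fun q => c * f q) p = c * lap f p := by
  simp only [lap, pd1_const_mul, pd2_const_mul, mul_add]

lemma sq_sub_sq_mul_cosh_mul_sinh (a y : ℝ) : (a * cosh y) ^ 2 - (a * sinh y) ^ 2 = a ^ 2 := by
  rw [mul_pow, mul_pow, ← mul_sub, cosh_sq_sub_sinh_sq, mul_one]

lemma mul_cosh_sub_mul_sinh_div_add (a y : ℝ) (ha : a ≠ 0) :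
    (a * cosh y - a * sinh y) / (a * cosh y + a * sinh y) = exp (-(2 * y)) := by
  rw [← mul_sub, ← mul_add, cosh_sub_sinh, cosh_add_sinh, mul_div_mul_left _ _ ha, ← exp_sub]
  ring_nf

lemma exp_mul_eq_exp_two_mul_iff {x a b : ℝ} : exp x * a = exp (2 * x) * b ↔ a = exp x * b := by
  rw [two_mul, exp_add, mul_assoc, mul_right_inj' (exp_ne_zero x)]

theorem minimal_euclidean_system_iff_canonical_form_general
    (D : Set (ℝ × ℝ))
    (X Y : ℝ × ℝ → ℝ)
    (K κ : ℝ × ℝ → ℝ)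
    (hK : ∀ p, K p = Real.exp (2 * X p) * Real.cosh (Y p))
    (hκ : ∀ p, κ p = Real.exp (2 * X p) * Real.sinh (Y p)) :
    ((∀ p ∈ D,
        (K p ^ 2 - κ p ^ 2) ^ ((1 : ℝ) / 4) *
            lap (fun q => Real.log ((K q ^ 2 - κ q ^ 2) ^ ((1 : ℝ) / 8))) p = K p) ∧
      (∀ p ∈ D,
        (K p ^ 2 - κ p ^ 2) ^ ((1 : ℝ) / 4) *
            lap (fun q => Real.log ((K q - κ q) / (K q + κ q))) p = -(4 * κ p))) ↔
    ((∀ p ∈ D, lap X p = 2 * Real.exp (X p) * Real.cosh (Y p)) ∧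
      (∀ p ∈ D, lap Y p = 2 * Real.exp (X p) * Real.sinh (Y p))) := by
  have h_sq_sub_sq (q : ℝ × ℝ) : K q ^ 2 - κ q ^ 2 = exp (X q) ^ (4 : ℝ) := by
    rw [hK, hκ, sq_sub_sq_mul_cosh_mul_sinh, ← exp_mul, ← exp_nat_mul]
    ring_nf
  have h_root (q : ℝ × ℝ) : (K q ^ 2 - κ q ^ 2) ^ ((1 : ℝ) / 4) = exp (X q) := by
    rw [h_sq_sub_sq, ← rpow_mul (exp_pos _).le]
    norm_num
  have h_log_root : (fun q => log ((K q ^ 2 - κ q ^ 2) ^ ((1 : ℝ) / 8))) = fun q => 1 / 2 * X q := by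
    funext q
    rw [h_sq_sub_sq, ← rpow_mul (exp_pos _).le, log_rpow (exp_pos _), log_exp]
    ring
  have h_log_ratio : (fun q => log ((K q - κ q) / (K q + κ q))) = fun q => -2 * Y q := by
    funext q
    rw [hK, hκ, mul_cosh_sub_mul_sinh_div_add _ _ (exp_ne_zero _), log_exp]
    ring
  rw [h_log_root, h_log_ratio]
  simp only [h_root, lap_const_mul]
  simp only [hK, hκ]
  refine and_congr (forall₂_congr fun p _ => ?_) (forall₂_congr fun p _ => ?_)
  · rw [exp_mul_eq_exp_two_mul_iff]
    constructor <;> intro h <;> linarith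
  · rw [show -(4 * (exp (2 * X p) * sinh (Y p))) = exp (2 * X p) * (-4 * sinh (Y p)) by ring,
      exp_mul_eq_exp_two_mul_iff]
    constructor <;> intro h <;> linarith

theorem minimal_euclidean_system_iff_canonical_form
    (D : Set (ℝ × ℝ)) (hD : IsOpen D)
    (X Y : ℝ × ℝ → ℝ)
    (hX : ContDiffOn ℝ 2 X D) (hY : ContDiffOn ℝ 2 Y D)
    (K κ : ℝ × ℝ → ℝ)
    (hK : ∀ p, K p = Real.exp (2 * X p) * Real.cosh (Y p))
    (hκ : ∀ p, κ p = Real.exp (2 * X p) * Real.sinh (Y p)) :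
    ((∀ p ∈ D,
        (K p ^ 2 - κ p ^ 2) ^ ((1 : ℝ) / 4) *
            lap (fun q => Real.log ((K q ^ 2 - κ q ^ 2) ^ ((1 : ℝ) / 8))) p = K p) ∧
      (∀ p ∈ D,
        (K p ^ 2 - κ p ^ 2) ^ ((1 : ℝ) / 4) *
            lap (fun q => Real.log ((K q - κ q) / (K q + κ q))) p = -(4 * κ p))) ↔
    ((∀ p ∈ D, lap X p = 2 * Real.exp (X p) * Real.cosh (Y p)) ∧
      (∀ p ∈ D, lap Y p = 2 * Real.exp (X p) * Real.sinh (Y p))) :=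
  minimal_euclidean_system_iff_canonical_form_general D X Y K κ hK hκ
end
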